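/- arXiv:2301.03555 — 6 statements merged into one kernel-verified Lean document; each statement's English description precedes it below -/
import Mathlib

section
/- For all positive integers m ≠ n, the function u_{mn} is L²-normalized on the right isosceles triangle: ∫_T u_{mn}(x,y)² dx dy = 1. -/
open Real MeasureTheory

/-- The sign `ε(m,n)`: `1` if `m+n` is odd, `-1` if `m+n` is even. -/
noncomputable def eps (m n : ℕ) : ℝ := if Odd (m + n) then 1 else -1

/-- The eigenfunctions `u_{mn}` on the right isosceles triangle. -/
noncomputable def u (m n : ℕ) (x y : ℝ) : ℝ :=
  2 * (Real.sin (n * Real.pi * x) * Real.sin (m * Real.pi * y)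
      + eps m n * Real.sin (m * Real.pi * x) * Real.sin (n * Real.pi * y))

/-- The right isosceles triangle `T` with vertices `(0,0)`, `(1,0)`, `(0,1)`. -/
def T : Set (ℝ × ℝ) := {p | 0 ≤ p.1 ∧ 0 ≤ p.2 ∧ p.1 + p.2 ≤ 1}

namespace NormAux

lemma eps_sq (m n : ℕ) : eps m n ^ 2 = 1 := by
  unfold eps; split_ifs <;> norm_num

lemma sin_flip (k : ℕ) (t : ℝ) :
    Real.sin ((k : ℝ) * π * (1 - t)) = -((-1) ^ k * Real.sin ((k : ℝ) * π * t)) := by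
  have h : (k : ℝ) * π * (1 - t) = (k : ℝ) * π - (k : ℝ) * π * t := by ring
  rw [h, Real.sin_nat_mul_pi_sub]

lemma u_flip (m n : ℕ) (x y : ℝ) :
    u m n (1 - y) (1 - x) = ((-1) ^ m * (-1) ^ n * eps m n) * u m n x y := by
  have he := eps_sq m n
  unfold u
  rw [sin_flip n y, sin_flip m x, sin_flip m y, sin_flip n x]
  set c : ℝ := (-1) ^ m
  set d : ℝ := (-1) ^ n
  set e : ℝ := eps m n
  set S1 := Real.sin ((n : ℝ) * π * x)
  set S2 := Real.sin ((m : ℝ) * π * x)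
  set S3 := Real.sin ((n : ℝ) * π * y)
  set S4 := Real.sin ((m : ℝ) * π * y)
  linear_combination (-(2 * c * d * S2 * S3)) * he

lemma u_flip_sq (m n : ℕ) (x y : ℝ) :
    (u m n (1 - y) (1 - x)) ^ 2 = (u m n x y) ^ 2 := by
  rw [u_flip, mul_pow]
  have he := eps_sq m n
  have hc : ((-1 : ℝ) ^ m) ^ 2 = 1 := by rw [← pow_mul, mul_comm, pow_mul]; norm_num
  have hd : ((-1 : ℝ) ^ n) ^ 2 = 1 := by rw [← pow_mul, mul_comm, pow_mul]; norm_num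
  have h1 : ((-1 : ℝ) ^ m * (-1) ^ n * eps m n) ^ 2 = 1 := by
    rw [mul_pow, mul_pow, hc, hd, he]; norm_num
  rw [h1, one_mul]

/-- The reflection across the line `x + y = 1`. -/
def φ (p : ℝ × ℝ) : ℝ × ℝ := (1 - p.2, 1 - p.1)

lemma φ_inv : Function.Involutive φ := fun p => by simp [φ]

lemma φ_cont : Continuous φ :=
  (continuous_const.sub continuous_snd).prodMk (continuous_const.sub continuous_fst)

noncomputable def φe : (ℝ × ℝ) ≃ᵐ (ℝ × ℝ) where
  toEquiv := φ_inv.toPerm φ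
  measurable_toFun := φ_cont.measurable
  measurable_invFun := φ_cont.measurable

lemma φ_mp : MeasurePreserving φ (volume : Measure (ℝ × ℝ)) volume := by
  have h1 : MeasurePreserving (fun x : ℝ => 1 - x) volume volume := by
    have := (measurePreserving_add_left (volume : Measure ℝ) 1).comp
      (Measure.measurePreserving_neg (volume : Measure ℝ))
    simpa [Function.comp_def, sub_eq_add_neg] using this
  rw [Measure.volume_eq_prod]
  exact (h1.prod h1).comp Measure.measurePreserving_swap

lemma int_sin_sq (k : ℕ) (hk : 0 < k) :
    ∫ x in (0:ℝ)..1, Real.sin ((k : ℝ) * π * x) ^ 2 = 1 / 2 := by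
  have hkπ : (0 : ℝ) < (k : ℝ) * π := by positivity
  have hder : ∀ t ∈ Set.uIcc (0:ℝ) 1,
      HasDerivAt (fun t : ℝ => t / 2 - Real.sin (2 * ((k : ℝ) * π) * t) / (4 * ((k : ℝ) * π)))
        (Real.sin ((k : ℝ) * π * t) ^ 2) t := by
    intro t _
    have h1 : HasDerivAt (fun t : ℝ => 2 * ((k : ℝ) * π) * t) (2 * ((k : ℝ) * π)) t := by
      simpa using (hasDerivAt_id t).const_mul (2 * ((k : ℝ) * π))
    have h3 := h1.sin.div_const (4 * ((k : ℝ) * π))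
    have h4 := (hasDerivAt_id t).div_const 2
    have h5 := h4.sub h3
    convert h5 using 1
    · rfl
    · rfl
    · rfl
    rw [Real.sin_sq_eq_half_sub]
    field_simp
    ring
  rw [intervalIntegral.integral_eq_sub_of_hasDerivAt hder (Continuous.intervalIntegrable (by fun_prop) 0 1)]
  have h0 : Real.sin (2 * ((k : ℝ) * π) * 1) = 0 := by
    have h : 2 * ((k : ℝ) * π) * 1 = ((2 * k : ℕ) : ℝ) * π := by push_cast; ring
    rw [h, Real.sin_nat_mul_pi]
  rw [h0]
  norm_num

lemma int_sin_mul (a b : ℕ) (ha : 0 < a) (hb : 0 < b) (hab : a ≠ b) :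
    ∫ x in (0:ℝ)..1, Real.sin ((a : ℝ) * π * x) * Real.sin ((b : ℝ) * π * x) = 0 := by
  set c : ℝ := ((a : ℝ) - b) * π with hc_def
  set d : ℝ := ((a : ℝ) + b) * π with hd_def
  have hc : c ≠ 0 := by
    have : (a : ℝ) ≠ b := Nat.cast_injective.ne hab
    have h1 : (a : ℝ) - b ≠ 0 := sub_ne_zero.mpr this
    exact mul_ne_zero h1 Real.pi_ne_zero
  have hd : d ≠ 0 := by
    have h1 : (0:ℝ) < (a : ℝ) + b := by positivity
    exact mul_ne_zero (ne_of_gt h1) Real.pi_ne_zero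
  have hder : ∀ t ∈ Set.uIcc (0:ℝ) 1,
      HasDerivAt (fun t : ℝ => Real.sin (c * t) / (2 * c) - Real.sin (d * t) / (2 * d))
        (Real.sin ((a : ℝ) * π * t) * Real.sin ((b : ℝ) * π * t)) t := by
    intro t _
    have h1 : HasDerivAt (fun t : ℝ => c * t) c t := by
      simpa using (hasDerivAt_id t).const_mul c
    have h2 : HasDerivAt (fun t : ℝ => d * t) d t := by
      simpa using (hasDerivAt_id t).const_mul d
    have h5 := (h1.sin.div_const (2 * c)).sub (h2.sin.div_const (2 * d))
    convert h5 using 1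
    · rfl
    · rfl
    · rfl
    have hcc : Real.cos (c * t) * c / (2 * c) = Real.cos (c * t) / 2 := by
      field_simp
    have hdd : Real.cos (d * t) * d / (2 * d) = Real.cos (d * t) / 2 := by
      field_simp
    rw [hcc, hdd, div_sub_div_same, Real.cos_sub_cos]
    have e1 : (c * t + d * t) / 2 = (a : ℝ) * π * t := by rw [hc_def, hd_def]; ring
    have e2 : (c * t - d * t) / 2 = -((b : ℝ) * π * t) := by rw [hc_def, hd_def]; ring
    rw [e1, e2, Real.sin_neg]
    ring
  rw [intervalIntegral.integral_eq_sub_of_hasDerivAt hder (Continuous.intervalIntegrable (by fun_prop) 0 1)]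
  have hsc : Real.sin (c * 1) = 0 := by
    have h : c * 1 = ((a - b : ℤ) : ℝ) * π := by rw [hc_def]; push_cast; ring
    rw [h, Real.sin_int_mul_pi]
  have hsd : Real.sin (d * 1) = 0 := by
    have h : d * 1 = ((a + b : ℤ) : ℝ) * π := by rw [hd_def]; push_cast; ring
    rw [h, Real.sin_int_mul_pi]
  rw [hsc, hsd]
  norm_num

lemma icc_int (g : ℝ → ℝ) : ∫ y in Set.Icc (0:ℝ) 1, g y = ∫ y in (0:ℝ)..1, g y := by
  rw [MeasureTheory.integral_Icc_eq_integral_Ioc,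
    ← intervalIntegral.integral_of_le (by norm_num : (0:ℝ) ≤ 1)]

lemma u_cont (m n : ℕ) : Continuous fun p : ℝ × ℝ => (u m n p.1 p.2) ^ 2 := by
  unfold u
  fun_prop

lemma inner_int (m n : ℕ) (hm : 0 < m) (hn : 0 < n) (hne : m ≠ n) (x : ℝ) :
    ∫ y in (0:ℝ)..1, (u m n x y) ^ 2
      = 2 * Real.sin ((n : ℝ) * π * x) ^ 2 + 2 * Real.sin ((m : ℝ) * π * x) ^ 2 := by
  have he := eps_sq m n
  have expand : ∀ y : ℝ, (u m n x y) ^ 2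
      = (4 * Real.sin ((n : ℝ) * π * x) ^ 2) * Real.sin ((m : ℝ) * π * y) ^ 2
        + ((8 * eps m n * Real.sin ((n : ℝ) * π * x) * Real.sin ((m : ℝ) * π * x))
            * (Real.sin ((m : ℝ) * π * y) * Real.sin ((n : ℝ) * π * y))
          + (4 * Real.sin ((m : ℝ) * π * x) ^ 2) * Real.sin ((n : ℝ) * π * y) ^ 2) := by
    intro y
    unfold u
    linear_combination (4 * Real.sin ((m : ℝ) * π * x) ^ 2 * Real.sin ((n : ℝ) * π * y) ^ 2) * he
  rw [intervalIntegral.integral_congr (fun y _ => expand y)]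
  rw [intervalIntegral.integral_add (Continuous.intervalIntegrable (by fun_prop) 0 1) (Continuous.intervalIntegrable (by fun_prop) 0 1),
    intervalIntegral.integral_add (Continuous.intervalIntegrable (by fun_prop) 0 1) (Continuous.intervalIntegrable (by fun_prop) 0 1),
    intervalIntegral.integral_const_mul, intervalIntegral.integral_const_mul,
    intervalIntegral.integral_const_mul,
    int_sin_sq m hm, int_sin_sq n hn, int_sin_mul m n hm hn hne]
  ring

lemma sq_int (m n : ℕ) (hm : 0 < m) (hn : 0 < n) (hne : m ≠ n) :
    ∫ p in (Set.Icc (0:ℝ) 1 ×ˢ Set.Icc (0:ℝ) 1), (u m n p.1 p.2) ^ 2 = 2 := by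
  have hInt : IntegrableOn (fun p : ℝ × ℝ => (u m n p.1 p.2) ^ 2)
      (Set.Icc (0:ℝ) 1 ×ˢ Set.Icc (0:ℝ) 1) volume :=
    (u_cont m n).locallyIntegrable.integrableOn_isCompact
      (isCompact_Icc.prod isCompact_Icc)
  rw [Measure.volume_eq_prod] at hInt ⊢
  rw [MeasureTheory.setIntegral_prod _ hInt]
  have hinner : ∀ x : ℝ, ∫ y in Set.Icc (0:ℝ) 1, (u m n x y) ^ 2
      = 2 * Real.sin ((n : ℝ) * π * x) ^ 2 + 2 * Real.sin ((m : ℝ) * π * x) ^ 2 := by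
    intro x
    rw [icc_int]
    exact inner_int m n hm hn hne x
  calc ∫ x in Set.Icc (0:ℝ) 1, ∫ y in Set.Icc (0:ℝ) 1, (u m n x y) ^ 2
      = ∫ x in Set.Icc (0:ℝ) 1,
          (2 * Real.sin ((n : ℝ) * π * x) ^ 2 + 2 * Real.sin ((m : ℝ) * π * x) ^ 2) := by
        exact MeasureTheory.setIntegral_congr_fun measurableSet_Icc fun x _ => hinner x
    _ = ∫ x in (0:ℝ)..1,
          (2 * Real.sin ((n : ℝ) * π * x) ^ 2 + 2 * Real.sin ((m : ℝ) * π * x) ^ 2) := icc_int _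
    _ = 2 := by
        rw [intervalIntegral.integral_add (Continuous.intervalIntegrable (by fun_prop) 0 1) (Continuous.intervalIntegrable (by fun_prop) 0 1),
          intervalIntegral.integral_const_mul, intervalIntegral.integral_const_mul,
          int_sin_sq m hm, int_sin_sq n hn]
        norm_num

end NormAux

open NormAux in
/-- For all positive integers `m ≠ n`, `u_{mn}` is `L²`-normalized on `T`:
`∫_T u_{mn}² dV = 1`. -/
theorem normalized (m n : ℕ) (hm : 0 < m) (hn : 0 < n) (hne : m ≠ n) :
    ∫ p in T, (u m n p.1 p.2) ^ 2 = 1 := by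
  set f : ℝ × ℝ → ℝ := fun p => (u m n p.1 p.2) ^ 2 with hf
  set T2 : Set (ℝ × ℝ) := φ ⁻¹' T with hT2
  have hTc : IsClosed T := by
    have h : T = {p : ℝ × ℝ | 0 ≤ p.1} ∩ ({p | 0 ≤ p.2} ∩ {p | p.1 + p.2 ≤ 1}) := by
      ext p; simp [T]
    rw [h]
    exact (isClosed_le continuous_const continuous_fst).inter
      ((isClosed_le continuous_const continuous_snd).inter
        (isClosed_le (continuous_fst.add continuous_snd) continuous_const))
  have hTm : MeasurableSet T := hTc.measurableSet
  have hT2m : MeasurableSet T2 := hTm.preimage φ_cont.measurable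
  -- the square
  set S : Set (ℝ × ℝ) := Set.Icc (0:ℝ) 1 ×ˢ Set.Icc (0:ℝ) 1 with hS
  have hTS : T ⊆ S := by
    rintro p ⟨h1, h2, h3⟩
    exact ⟨⟨h1, by linarith⟩, ⟨h2, by linarith⟩⟩
  have hT2S : T2 ⊆ S := by
    rintro p ⟨h1, h2, h3⟩
    simp only [φ] at h1 h2 h3
    exact ⟨⟨by linarith, by linarith⟩, ⟨by linarith, by linarith⟩⟩
  have hunion : S = T ∪ T2 := by
    ext p
    simp only [hS, hT2, Set.mem_prod, Set.mem_Icc, Set.mem_union, Set.mem_preimage, φ, T,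
      Set.mem_setOf_eq]
    constructor
    · rintro ⟨⟨h1, h2⟩, h3, h4⟩
      by_cases h : p.1 + p.2 ≤ 1
      · exact Or.inl ⟨h1, h3, h⟩
      · exact Or.inr ⟨by linarith, by linarith, by linarith⟩
    · rintro (⟨h1, h2, h3⟩ | ⟨h1, h2, h3⟩)
      · exact ⟨⟨h1, by linarith⟩, h2, by linarith⟩
      · exact ⟨⟨by linarith, by linarith⟩, ⟨by linarith, by linarith⟩⟩
  -- the line x + y = 1 is null
  have hN : volume {p : ℝ × ℝ | p.1 + p.2 = 1} = 0 := by
    have hNm : MeasurableSet {p : ℝ × ℝ | p.1 + p.2 = 1} :=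
      (isClosed_eq (continuous_fst.add continuous_snd) continuous_const).measurableSet
    rw [Measure.volume_eq_prod, Measure.measure_prod_null hNm]
    refine Filter.Eventually.of_forall fun x => ?_
    have h : (Prod.mk x ⁻¹' {p : ℝ × ℝ | p.1 + p.2 = 1}) = {1 - x} := by
      ext y
      simp only [Set.mem_preimage, Set.mem_setOf_eq, Set.mem_singleton_iff]
      constructor <;> intro h <;> linarith
    simp [h]
  have hdisj : AEDisjoint volume T T2 := by
    refine measure_mono_null (fun p hp => ?_) hN
    obtain ⟨⟨h1, h2, h3⟩, h4, h5, h6⟩ := hp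
    simp only [φ] at h4 h5 h6
    simp only [Set.mem_setOf_eq]
    linarith
  have hIntS : IntegrableOn f S volume :=
    (u_cont m n).locallyIntegrable.integrableOn_isCompact (isCompact_Icc.prod isCompact_Icc)
  have hIntT : IntegrableOn f T volume := hIntS.mono_set hTS
  have hIntT2 : IntegrableOn f T2 volume := hIntS.mono_set hT2S
  have key : ∫ p in S, f p = (∫ p in T, f p) + ∫ p in T2, f p := by
    rw [hunion]
    exact MeasureTheory.integral_union_ae hdisj hT2m.nullMeasurableSet hIntT hIntT2
  have flip : ∫ p in T2, f p = ∫ p in T, f p := by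
    have himg : φ '' T = T2 := by
      rw [Set.image_eq_preimage_of_inverse φ_inv.leftInverse φ_inv.rightInverse]
    have h := φ_mp.setIntegral_image_emb φe.measurableEmbedding f T
    rw [himg] at h
    rw [h]
    have hfeq : (fun p : ℝ × ℝ => f (φ p)) = f := by
      funext p
      simp only [hf, φ]
      exact u_flip_sq m n p.1 p.2
    rw [hfeq]
  have hS2 : ∫ p in S, f p = 2 := sq_int m n hm hn hne
  linarith
end

section
/- For all positive integers m ≠ n, the semiclassical energy of u_{mn} is split equally between the two coordinate directions: ∫_T h_{mn}²(∂_x u_{mn}(x,y))² dx dy = 1/2 and ∫_T h_{mn}²(∂_y u_{mn}(x,y))² dx dy = 1/2. -/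
open Real MeasureTheory

/-- The semiclassical parameter `h_{mn} = (π²(m²+n²))^{-1/2}`. -/
noncomputable def hmn (m n : ℕ) : ℝ :=
  1 / Real.sqrt (Real.pi ^ 2 * ((m : ℝ) ^ 2 + (n : ℝ) ^ 2))

open Set intervalIntegral

lemma T_measurable : MeasurableSet T := by
  have : T = (fun p : ℝ × ℝ => p.1) ⁻¹' (Ici 0) ∩ ((fun p : ℝ × ℝ => p.2) ⁻¹' (Ici 0)
      ∩ (fun p : ℝ × ℝ => p.1 + p.2) ⁻¹' (Iic 1)) := by
    ext p; simp [T, and_assoc]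
  rw [this]
  exact (measurable_fst measurableSet_Ici).inter
    ((measurable_snd measurableSet_Ici).inter
      ((measurable_fst.add measurable_snd) measurableSet_Iic))

lemma T_subset : T ⊆ Icc ((0:ℝ),(0:ℝ)) (1,1) := by
  rintro ⟨x, y⟩ ⟨hx, hy, hxy⟩
  constructor <;> constructor <;> simp_all <;> linarith

lemma triangle_integral (F : ℝ × ℝ → ℝ) (hF : Continuous F) :
    ∫ p in T, F p = ∫ x in (0:ℝ)..1, ∫ y in (0:ℝ)..(1-x), F (x, y) := by
  have hT := T_measurable
  have hInt : IntegrableOn F T := (hF.integrableOn_Icc).mono_set T_subset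
  have hInd : Integrable (T.indicator F) := hInt.integrable_indicator hT
  rw [← MeasureTheory.integral_indicator hT]
  rw [Measure.volume_eq_prod] at hInd ⊢
  rw [MeasureTheory.integral_prod _ hInd]
  have hx : ∀ x : ℝ, (∫ y, T.indicator F (x, y)) =
      Set.indicator (Set.Icc (0:ℝ) 1) (fun x => ∫ y in Set.Icc 0 (1-x), F (x,y)) x := by
    intro x
    rcases le_or_gt 0 x with h0 | h0
    · have hfun : (fun y => T.indicator F (x, y)) =
          (Set.Icc (0:ℝ) (1-x)).indicator (fun y => F (x, y)) := by
        funext y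
        rcases le_or_gt 0 y with hy | hy
        · rcases le_or_gt (x + y) 1 with hxy | hxy
          · rw [Set.indicator_of_mem (by exact ⟨h0, hy, hxy⟩ : (x,y) ∈ T),
              Set.indicator_of_mem (by constructor <;> linarith)]
          · rw [Set.indicator_of_notMem (fun h => by obtain ⟨h1, h2, h3⟩ := h; linarith),
              Set.indicator_of_notMem (by simp; intro _; linarith)]
        · rw [Set.indicator_of_notMem (fun h => by obtain ⟨h1, h2, h3⟩ := h; linarith),
            Set.indicator_of_notMem (by simp; intro; linarith)]
      rw [hfun, MeasureTheory.integral_indicator measurableSet_Icc]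
      rcases le_or_gt x 1 with h1 | h1
      · rw [Set.indicator_of_mem (Set.mem_Icc.2 ⟨h0, h1⟩)]
      · rw [Set.indicator_of_notMem (by simp; intro; linarith),
          Set.Icc_eq_empty (by linarith), Measure.restrict_empty, integral_zero_measure]
    · have hfun : (fun y => T.indicator F (x, y)) = fun _ => 0 := by
        funext y
        rw [Set.indicator_of_notMem (fun h => by obtain ⟨h1, h2, h3⟩ := h; linarith)]
      rw [hfun, MeasureTheory.integral_zero, Set.indicator_of_notMem (by simp; intro; linarith)]
  simp_rw [hx]
  rw [MeasureTheory.integral_indicator measurableSet_Icc, integral_Icc_eq_integral_Ioc,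
    ← intervalIntegral.integral_of_le zero_le_one]
  apply intervalIntegral.integral_congr
  intro x hxmem
  rw [Set.uIcc_of_le zero_le_one] at hxmem
  have h01 : (0:ℝ) ≤ 1 - x := by linarith [hxmem.2]
  dsimp only
  rw [integral_Icc_eq_integral_Ioc, ← intervalIntegral.integral_of_le h01]

lemma int_sin2 {c : ℝ} (hs : Real.sin c = 0) (hc : c ≠ 0) :
    ∫ x in (0:ℝ)..1, Real.sin (2*c*x) = 0 := by
  have hd : ∀ x ∈ Set.uIcc (0:ℝ) 1,
      HasDerivAt (fun x => -Real.cos (2*c*x)/(2*c)) (Real.sin (2*c*x)) x := by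
    intro x _
    have h1 : HasDerivAt (fun x : ℝ => 2*c*x) (2*c) x := by
      simpa using (hasDerivAt_id x).const_mul (2*c)
    have h2 := (h1.cos).neg.div_const (2*c)
    refine h2.congr_deriv ?_
    field_simp
  rw [integral_eq_sub_of_hasDerivAt hd (by apply Continuous.intervalIntegrable; fun_prop)]
  have h2c : Real.cos (2*c) = 1 := by
    rw [show (2:ℝ)*c = c + c by ring, Real.cos_add, hs]
    nlinarith [Real.sin_sq_add_cos_sq c]
  simp [h2c]

lemma int_lin_cos {c : ℝ} (hs : Real.sin c = 0) (hc : c ≠ 0) :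
    ∫ x in (0:ℝ)..1, (1-x)*Real.cos (2*c*x) = 0 := by
  have hd : ∀ x ∈ Set.uIcc (0:ℝ) 1,
      HasDerivAt (fun x => (1-x)*Real.sin (2*c*x)/(2*c) - Real.cos (2*c*x)/(4*c^2))
        ((1-x)*Real.cos (2*c*x)) x := by
    intro x _
    have h1 : HasDerivAt (fun x : ℝ => 2*c*x) (2*c) x := by
      simpa using (hasDerivAt_id x).const_mul (2*c)
    have h2 : HasDerivAt (fun x : ℝ => (1-x)) (-1) x := by
      simpa using ((hasDerivAt_id x).const_sub 1)
    have h3 := ((h2.mul h1.sin).div_const (2*c)).sub (h1.cos.div_const (4*c^2))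
    refine h3.congr_deriv ?_
    field_simp
    ring
  rw [integral_eq_sub_of_hasDerivAt hd (by apply Continuous.intervalIntegrable; fun_prop)]
  have h2c : Real.cos (2*c) = 1 := by
    rw [show (2:ℝ)*c = c + c by ring, Real.cos_add, hs]
    nlinarith [Real.sin_sq_add_cos_sq c]
  have h2s : Real.sin (2*c) = 0 := by
    rw [show (2:ℝ)*c = c + c by ring, Real.sin_add, hs]; ring
  simp [h2c, h2s]

lemma int_cos_sq_lin {c : ℝ} (hs : Real.sin c = 0) (hc : c ≠ 0) :
    ∫ x in (0:ℝ)..1, Real.cos (c*x)^2 * (1-x) = 1/4 := by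
  have heq : ∀ x : ℝ, Real.cos (c*x)^2 * (1-x)
      = (1/2)*(1-x) + (1/2)*((1-x)*Real.cos (2*c*x)) := by
    intro x
    rw [show (2:ℝ)*c*x = 2*(c*x) by ring, Real.cos_two_mul]
    ring
  rw [intervalIntegral.integral_congr (fun x _ => heq x)]
  rw [intervalIntegral.integral_add
      (by apply Continuous.intervalIntegrable; fun_prop)
      (by apply Continuous.intervalIntegrable; fun_prop),
    intervalIntegral.integral_const_mul, intervalIntegral.integral_const_mul,
    int_lin_cos hs hc]
  have : ∫ x in (0:ℝ)..1, (1-x) = 1/2 := by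
    rw [intervalIntegral.integral_sub (by apply Continuous.intervalIntegrable; fun_prop)
      (by apply Continuous.intervalIntegrable; fun_prop)]
    simp
    norm_num
  rw [this]; norm_num

lemma int_cos_sq_sincos {c d : ℝ} (hsc : Real.sin c = 0) (hsd : Real.sin d = 0)
    (hd0 : d ≠ 0) (hcd : c + d ≠ 0) (hcd' : c - d ≠ 0) :
    ∫ x in (0:ℝ)..1, Real.cos (c*x)^2 * (Real.sin (d*x) * Real.cos (d*x)) = 0 := by
  have hscd : Real.sin (c+d) = 0 := by rw [Real.sin_add, hsc, hsd]; ring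
  have hscd' : Real.sin (c-d) = 0 := by rw [Real.sin_sub, hsc, hsd]; ring
  have heq : ∀ x : ℝ, Real.cos (c*x)^2 * (Real.sin (d*x) * Real.cos (d*x))
      = (1/4)*Real.sin (2*d*x) + ((1/8)*Real.sin (2*(c+d)*x) - (1/8)*Real.sin (2*(c-d)*x)) := by
    intro x
    rw [show (2:ℝ)*(c+d)*x = 2*c*x + 2*d*x by ring, Real.sin_add,
      show (2:ℝ)*(c-d)*x = 2*c*x - 2*d*x by ring, Real.sin_sub,
      show (2:ℝ)*d*x = 2*(d*x) by ring, Real.sin_two_mul (d*x),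
      show (2:ℝ)*c*x = 2*(c*x) by ring, Real.cos_two_mul (c*x)]
    ring
  rw [intervalIntegral.integral_congr (fun x _ => heq x),
    intervalIntegral.integral_add
      (by apply Continuous.intervalIntegrable; fun_prop)
      (by apply Continuous.intervalIntegrable; fun_prop),
    intervalIntegral.integral_sub
      (by apply Continuous.intervalIntegrable; fun_prop)
      (by apply Continuous.intervalIntegrable; fun_prop),
    intervalIntegral.integral_const_mul, intervalIntegral.integral_const_mul,
    intervalIntegral.integral_const_mul,
    int_sin2 hsd hd0, int_sin2 hscd hcd, int_sin2 hscd' hcd']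
  ring

lemma hd_sin_sq {b : ℝ} (hb : b ≠ 0) (y : ℝ) :
    HasDerivAt (fun y => y/2 - Real.sin (b*y)*Real.cos (b*y)/(2*b)) (Real.sin (b*y)^2) y := by
  have hby : HasDerivAt (fun y : ℝ => b*y) b y := by simpa using (hasDerivAt_id y).const_mul b
  have h := ((hasDerivAt_id y).div_const 2).sub ((hby.sin.mul hby.cos).div_const (2*b))
  refine h.congr_deriv ?_
  field_simp
  linear_combination (-1) * Real.sin_sq_add_cos_sq (b*y)

lemma hd_sin_sin {a b : ℝ} (hab : a^2 - b^2 ≠ 0) (y : ℝ) :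
    HasDerivAt (fun y => (b*(Real.sin (a*y)*Real.cos (b*y)) - a*(Real.cos (a*y)*Real.sin (b*y)))/(a^2-b^2))
      (Real.sin (a*y)*Real.sin (b*y)) y := by
  have hay : HasDerivAt (fun y : ℝ => a*y) a y := by simpa using (hasDerivAt_id y).const_mul a
  have hby : HasDerivAt (fun y : ℝ => b*y) b y := by simpa using (hasDerivAt_id y).const_mul b
  have h := (((hay.sin.mul hby.cos).const_mul b).sub ((hay.cos.mul hby.sin).const_mul a)).div_const (a^2-b^2)
  refine h.congr_deriv ?_
  field_simp
  ring

lemma inner_int {a b e : ℝ} (ha : a ≠ 0) (hb : b ≠ 0) (hab : a^2 - b^2 ≠ 0)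
    (he : e^2 = 1) (c₁ c₂ s : ℝ) :
    ∫ y in (0:ℝ)..s, (2*(a*c₁*Real.sin (b*y) + e*b*c₂*Real.sin (a*y)))^2 =
    4*( a^2*c₁^2*(s/2 - Real.sin (b*s)*Real.cos (b*s)/(2*b))
      + b^2*c₂^2*(s/2 - Real.sin (a*s)*Real.cos (a*s)/(2*a))
      + 2*e*a*b*(c₁*c₂)*((b*(Real.sin (a*s)*Real.cos (b*s))
          - a*(Real.cos (a*s)*Real.sin (b*s)))/(a^2-b^2)) ) := by
  have hd : ∀ y ∈ Set.uIcc (0:ℝ) s,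
      HasDerivAt (fun y =>
        4*( a^2*c₁^2*(y/2 - Real.sin (b*y)*Real.cos (b*y)/(2*b))
          + b^2*c₂^2*(y/2 - Real.sin (a*y)*Real.cos (a*y)/(2*a))
          + 2*e*a*b*(c₁*c₂)*((b*(Real.sin (a*y)*Real.cos (b*y))
              - a*(Real.cos (a*y)*Real.sin (b*y)))/(a^2-b^2)) ))
        ((2*(a*c₁*Real.sin (b*y) + e*b*c₂*Real.sin (a*y)))^2) y := by
    intro y _
    have h := ((((hd_sin_sq hb y).const_mul (a^2*c₁^2)).add
        ((hd_sin_sq ha y).const_mul (b^2*c₂^2))).add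
        (((hd_sin_sin hab y).const_mul (2*e*a*b*(c₁*c₂))))).const_mul 4
    refine h.congr_deriv ?_
    linear_combination (-(4*b^2*c₂^2*Real.sin (a*y)^2)) * he
  rw [intervalIntegral.integral_eq_sub_of_hasDerivAt hd
    (by apply Continuous.intervalIntegrable; fun_prop)]
  simp

set_option maxHeartbeats 2000000 in
lemma outer_int {a b e : ℝ} (hsa : Real.sin a = 0) (hsb : Real.sin b = 0)
    (ha : a ≠ 0) (hb : b ≠ 0) (hab : a - b ≠ 0) (hab' : a + b ≠ 0)
    (he : e^2 = 1) (hcc : Real.cos a * Real.cos b = -e) :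
    ∫ x in (0:ℝ)..1,
      ( a^2*Real.cos (a*x)^2*((1-x)/2 - Real.sin (b*(1-x))*Real.cos (b*(1-x))/(2*b))
        + b^2*Real.cos (b*x)^2*((1-x)/2 - Real.sin (a*(1-x))*Real.cos (a*(1-x))/(2*a))
        + 2*e*a*b*(Real.cos (a*x)*Real.cos (b*x))*((b*(Real.sin (a*(1-x))*Real.cos (b*(1-x)))
            - a*(Real.cos (a*(1-x))*Real.sin (b*(1-x))))/(a^2-b^2)) )
      = (a^2+b^2)/8 := by
  have hab2 : a^2 - b^2 ≠ 0 := by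
    have h := mul_ne_zero hab hab'
    intro h0; apply h; linear_combination h0
  have hca : Real.cos a = 1 ∨ Real.cos a = -1 := by
    have h1 : Real.cos a * Real.cos a = 1 := by nlinarith [Real.sin_sq_add_cos_sq a]
    exact mul_self_eq_one_iff.mp h1
  have hcb : Real.cos b = 1 ∨ Real.cos b = -1 := by
    have h1 : Real.cos b * Real.cos b = 1 := by nlinarith [Real.sin_sq_add_cos_sq b]
    exact mul_self_eq_one_iff.mp h1
  have he' : e = -(Real.cos a * Real.cos b) := by linarith [hcc]
  have key : ∀ x : ℝ,
      ( a^2*Real.cos (a*x)^2*((1-x)/2 - Real.sin (b*(1-x))*Real.cos (b*(1-x))/(2*b))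
        + b^2*Real.cos (b*x)^2*((1-x)/2 - Real.sin (a*(1-x))*Real.cos (a*(1-x))/(2*a))
        + 2*e*a*b*(Real.cos (a*x)*Real.cos (b*x))*((b*(Real.sin (a*(1-x))*Real.cos (b*(1-x)))
            - a*(Real.cos (a*(1-x))*Real.sin (b*(1-x))))/(a^2-b^2)) )
      = (a^2/2*(Real.cos (a*x)^2*(1-x)) + b^2/2*(Real.cos (b*x)^2*(1-x)))
        + ((a^2/(2*b) - 2*a^2*b/(a^2-b^2))*(Real.cos (a*x)^2*(Real.sin (b*x)*Real.cos (b*x)))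
          + (b^2/(2*a) + 2*a*b^2/(a^2-b^2))*(Real.cos (b*x)^2*(Real.sin (a*x)*Real.cos (a*x)))) := by
    intro x
    rw [show b*(1-x) = b - b*x by ring, show a*(1-x) = a - a*x by ring,
      Real.sin_sub, Real.sin_sub, Real.cos_sub, Real.cos_sub, hsa, hsb, he']
    rcases hca with h1 | h1 <;> rcases hcb with h2 | h2 <;> rw [h1, h2] <;>
      field_simp <;> ring
  rw [intervalIntegral.integral_congr (fun x _ => key x),
    intervalIntegral.integral_add
      (by apply Continuous.intervalIntegrable; fun_prop)
      (by apply Continuous.intervalIntegrable; fun_prop),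
    intervalIntegral.integral_add
      (by apply Continuous.intervalIntegrable; fun_prop)
      (by apply Continuous.intervalIntegrable; fun_prop),
    intervalIntegral.integral_add
      (by apply Continuous.intervalIntegrable; fun_prop)
      (by apply Continuous.intervalIntegrable; fun_prop),
    intervalIntegral.integral_const_mul, intervalIntegral.integral_const_mul,
    intervalIntegral.integral_const_mul, intervalIntegral.integral_const_mul,
    int_cos_sq_lin hsa ha, int_cos_sq_lin hsb hb,
    int_cos_sq_sincos hsa hsb hb hab' hab,
    int_cos_sq_sincos hsb hsa ha (by rwa [add_comm]) (by intro h; apply hab; linarith)]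
  ring

lemma deriv_u_fst (m n : ℕ) (y x : ℝ) :
    deriv (fun x => u m n x y) x
      = 2*((n:ℝ)*π*Real.cos ((n:ℝ)*π*x)*Real.sin ((m:ℝ)*π*y)
        + eps m n*((m:ℝ)*π)*Real.cos ((m:ℝ)*π*x)*Real.sin ((n:ℝ)*π*y)) := by
  have h1 : HasDerivAt (fun x : ℝ => (n:ℝ)*π*x) ((n:ℝ)*π) x := by
    simpa using (hasDerivAt_id x).const_mul ((n:ℝ)*π)
  have h2 : HasDerivAt (fun x : ℝ => (m:ℝ)*π*x) ((m:ℝ)*π) x := by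
    simpa using (hasDerivAt_id x).const_mul ((m:ℝ)*π)
  have h : HasDerivAt (fun x => u m n x y)
      ((Real.cos ((n:ℝ)*π*x)*((n:ℝ)*π)*Real.sin ((m:ℝ)*π*y)
        + eps m n*(Real.cos ((m:ℝ)*π*x)*((m:ℝ)*π))*Real.sin ((n:ℝ)*π*y))*2) x := by
    exact (((h1.sin.mul_const _).add
      ((h2.sin.const_mul (eps m n)).mul_const _)).const_mul 2).congr_deriv (by ring)
  rw [h.deriv]; ring

lemma deriv_u_snd (m n : ℕ) (x y : ℝ) :
    deriv (fun y => u m n x y) y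
      = 2*((m:ℝ)*π*Real.sin ((n:ℝ)*π*x)*Real.cos ((m:ℝ)*π*y)
        + eps m n*((n:ℝ)*π)*Real.sin ((m:ℝ)*π*x)*Real.cos ((n:ℝ)*π*y)) := by
  have h1 : HasDerivAt (fun y : ℝ => (n:ℝ)*π*y) ((n:ℝ)*π) y := by
    simpa using (hasDerivAt_id y).const_mul ((n:ℝ)*π)
  have h2 : HasDerivAt (fun y : ℝ => (m:ℝ)*π*y) ((m:ℝ)*π) y := by
    simpa using (hasDerivAt_id y).const_mul ((m:ℝ)*π)
  have h : HasDerivAt (fun y => u m n x y)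
      ((Real.sin ((n:ℝ)*π*x)*(Real.cos ((m:ℝ)*π*y)*((m:ℝ)*π))
        + (eps m n*Real.sin ((m:ℝ)*π*x))*(Real.cos ((n:ℝ)*π*y)*((n:ℝ)*π)))*2) y := by
    exact (((h2.sin.const_mul _).add
      (h1.sin.const_mul (eps m n * Real.sin ((m:ℝ)*π*x)))).const_mul 2).congr_deriv (by ring)
  rw [h.deriv]; ring

/-- For all positive integers `m ≠ n`, the semiclassical energy of `u_{mn}` is split
equally between the two coordinate directions. -/
theorem energy_split (m n : ℕ) (hm : 0 < m) (hn : 0 < n) (hne : m ≠ n) :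
    (∫ p in T, (hmn m n) ^ 2 * (deriv (fun x => u m n x p.2) p.1) ^ 2 = 1 / 2) ∧
    (∫ p in T, (hmn m n) ^ 2 * (deriv (fun y => u m n p.1 y) p.2) ^ 2 = 1 / 2) := by
  have hπ : Real.pi ≠ 0 := Real.pi_ne_zero
  have hn' : (0:ℝ) < n := by exact_mod_cast hn
  have hm' : (0:ℝ) < m := by exact_mod_cast hm
  have haz : (n:ℝ)*π ≠ 0 := mul_ne_zero (Nat.cast_ne_zero.mpr hn.ne') hπ
  have hbz : (m:ℝ)*π ≠ 0 := mul_ne_zero (Nat.cast_ne_zero.mpr hm.ne') hπ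
  have hnm : (n:ℝ) ≠ (m:ℝ) := fun h => hne (Nat.cast_injective h).symm
  have hab : (n:ℝ)*π - (m:ℝ)*π ≠ 0 := by
    have h1 : ((n:ℝ) - m) * π ≠ 0 := mul_ne_zero (sub_ne_zero.mpr hnm) hπ
    intro h; exact h1 (by linear_combination h)
  have hab' : (n:ℝ)*π + (m:ℝ)*π ≠ 0 := by
    have : (0:ℝ) < (n:ℝ)*π + (m:ℝ)*π := by positivity
    exact this.ne'
  have hab2 : ((n:ℝ)*π)^2 - ((m:ℝ)*π)^2 ≠ 0 := by
    intro h; exact (mul_ne_zero hab hab') (by linear_combination h)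
  have hsa : Real.sin ((n:ℝ)*π) = 0 := Real.sin_nat_mul_pi n
  have hsb : Real.sin ((m:ℝ)*π) = 0 := Real.sin_nat_mul_pi m
  have he : eps m n ^ 2 = 1 := by unfold eps; split_ifs <;> norm_num
  have hca : Real.cos ((n:ℝ)*π) = (-1)^n := by
    simpa using Real.cos_nat_mul_pi_sub 0 n
  have hcb : Real.cos ((m:ℝ)*π) = (-1)^m := by
    simpa using Real.cos_nat_mul_pi_sub 0 m
  have hcc : Real.cos ((n:ℝ)*π) * Real.cos ((m:ℝ)*π) = -(eps m n) := by
    rw [hca, hcb, ← pow_add]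
    unfold eps
    split_ifs with h
    · rw [Odd.neg_one_pow (by rwa [add_comm] at h)]
    · rw [Even.neg_one_pow (by rw [add_comm]; exact Nat.not_odd_iff_even.mp h)]
      norm_num
  have hK : hmn m n ^ 2 = 1/(π^2*((m:ℝ)^2+(n:ℝ)^2)) := by
    unfold hmn
    rw [div_pow, one_pow, Real.sq_sqrt (by positivity)]
  have ht : π^2*((m:ℝ)^2+(n:ℝ)^2) ≠ 0 := by positivity
  have main1 : ∫ p in T, hmn m n ^2 * (2*((n:ℝ)*π*Real.cos ((n:ℝ)*π*p.1)*Real.sin ((m:ℝ)*π*p.2)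
      + eps m n*((m:ℝ)*π)*Real.cos ((m:ℝ)*π*p.1)*Real.sin ((n:ℝ)*π*p.2)))^2 = 1/2 := by
    rw [triangle_integral _ (by fun_prop)]
    dsimp only
    simp_rw [intervalIntegral.integral_const_mul, inner_int haz hbz hab2 he]
    rw [intervalIntegral.integral_const_mul, outer_int hsa hsb haz hbz hab hab' he hcc, hK]
    field_simp
    ring
  constructor
  · simp only [deriv_u_fst]
    exact main1
  · simp only [deriv_u_snd]
    have hswap : MeasurePreserving (Prod.swap : ℝ×ℝ → ℝ×ℝ) volume volume := by
      rw [Measure.volume_eq_prod]; exact Measure.measurePreserving_swap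
    have hemb : MeasurableEmbedding (Prod.swap : ℝ×ℝ → ℝ×ℝ) :=
      MeasurableEquiv.prodComm.measurableEmbedding
    have hpre : (Prod.swap : ℝ×ℝ → ℝ×ℝ) ⁻¹' T = T := by
      ext ⟨x, y⟩
      simp only [Set.mem_preimage, Prod.swap_prod_mk]
      constructor <;> rintro ⟨h1, h2, h3⟩ <;> exact ⟨h2, h1, by linarith⟩
    have step := hswap.setIntegral_preimage_emb hemb
      (fun p : ℝ×ℝ => hmn m n ^2 * (2*((m:ℝ)*π*Real.sin ((n:ℝ)*π*p.1)*Real.cos ((m:ℝ)*π*p.2)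
        + eps m n*((n:ℝ)*π)*Real.sin ((m:ℝ)*π*p.1)*Real.cos ((n:ℝ)*π*p.2)))^2) T
    rw [← step, hpre]
    rw [MeasureTheory.setIntegral_congr_fun T_measurable
      (g := fun p : ℝ×ℝ => hmn m n ^2 * (2*((n:ℝ)*π*Real.cos ((n:ℝ)*π*p.1)*Real.sin ((m:ℝ)*π*p.2)
        + eps m n*((m:ℝ)*π)*Real.cos ((m:ℝ)*π*p.1)*Real.sin ((n:ℝ)*π*p.2)))^2)
      (fun p _ => by
        simp only [Prod.fst_swap, Prod.snd_swap]
        linear_combination (4*hmn m n ^2*(((n:ℝ)*π*Real.cos ((n:ℝ)*π*p.1)*Real.sin ((m:ℝ)*π*p.2))^2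
          - ((m:ℝ)*π*Real.sin ((n:ℝ)*π*p.2)*Real.cos ((m:ℝ)*π*p.1))^2)) * he)]
    exact main1
end

section
/- Let m ≠ n be positive integers with m + n odd. Then the Neumann data of u_{mn} on the left half of the bottom side of the right isosceles triangle satisfies the exact formula ∫₀^{1/2} h_{mn}²·(∂_y u_{mn}(x,0))² dx = 1 + (4mn/(π(m²+n²)))·( sin(π(n−m)/2)/(n−m) − sin(π(n+m)/2)/(n+m) ). -/
open Real MeasureTheory

lemma hasDerivAt_sin_cmul (c y : ℝ) :
    HasDerivAt (fun t : ℝ => Real.sin (c * t)) (c * Real.cos (c * y)) y := by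
  simpa [mul_comm, Function.comp_def] using (Real.hasDerivAt_sin (c*y)).comp y ((hasDerivAt_id y).const_mul c)

lemma key (m n : ℕ) (hm : 0 < m) (hn : 0 < n) (hne : m ≠ n) :
    ∫ x in (0:ℝ)..(1/2), ((m:ℝ) * Real.sin (n*π*x) + n * Real.sin (m*π*x))^2
      = ((m:ℝ)^2 + (n:ℝ)^2)/4
        + m*n*(Real.sin (((n:ℝ)-m)*π/2)/(((n:ℝ)-m)*π)
             - Real.sin (((n:ℝ)+m)*π/2)/(((n:ℝ)+m)*π)) := by
  have hπ : π ≠ 0 := Real.pi_ne_zero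
  have hm0 : (m:ℝ) ≠ 0 := Nat.cast_ne_zero.mpr hm.ne'
  have hn0 : (n:ℝ) ≠ 0 := Nat.cast_ne_zero.mpr hn.ne'
  have hsub : (n:ℝ) - m ≠ 0 := sub_ne_zero.mpr (by exact_mod_cast (Ne.symm hne))
  have hadd : (n:ℝ) + m ≠ 0 := by positivity
  set F : ℝ → ℝ := fun x =>
    (m:ℝ)^2/2 * (x - Real.sin (2*n*π*x)/(2*n*π))
    + (n:ℝ)^2/2 * (x - Real.sin (2*m*π*x)/(2*m*π))
    + m*n*(Real.sin (((n:ℝ)-m)*π*x)/(((n:ℝ)-m)*π)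
         - Real.sin (((n:ℝ)+m)*π*x)/(((n:ℝ)+m)*π)) with hF
  have hderiv : ∀ x ∈ Set.uIcc (0:ℝ) (1/2),
      HasDerivAt F (((m:ℝ) * Real.sin (n*π*x) + n * Real.sin (m*π*x))^2) x := by
    intro x _
    have h1 := hasDerivAt_sin_cmul (2*n*π) x
    have h2 := hasDerivAt_sin_cmul (2*m*π) x
    have h3 := hasDerivAt_sin_cmul (((n:ℝ)-m)*π) x
    have h4 := hasDerivAt_sin_cmul (((n:ℝ)+m)*π) x
    have H : HasDerivAt F
        ((m:ℝ)^2/2 * (1 - (2*n*π * Real.cos (2*n*π*x))/(2*n*π))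
          + (n:ℝ)^2/2 * (1 - (2*m*π * Real.cos (2*m*π*x))/(2*m*π))
          + m*n*(((((n:ℝ)-m)*π) * Real.cos (((n:ℝ)-m)*π*x))/(((n:ℝ)-m)*π)
               - ((((n:ℝ)+m)*π) * Real.cos (((n:ℝ)+m)*π*x))/(((n:ℝ)+m)*π))) x := by
      exact ((((hasDerivAt_id x).sub (h1.div_const _)).const_mul _).add
        (((hasDerivAt_id x).sub (h2.div_const _)).const_mul _)).add
        (((h3.div_const _).sub (h4.div_const _)).const_mul _)
    convert H using 1
    have e1 : Real.sin (n*π*x)^2 = 1/2 - Real.cos (2*(n*π*x))/2 := by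
      rw [Real.sin_sq, Real.cos_sq]; ring
    have e2 : Real.sin (m*π*x)^2 = 1/2 - Real.cos (2*(m*π*x))/2 := by
      rw [Real.sin_sq, Real.cos_sq]; ring
    have e3 : Real.sin (n*π*x) * Real.sin (m*π*x)
        = (Real.cos (n*π*x - m*π*x) - Real.cos (n*π*x + m*π*x))/2 := by
      rw [Real.cos_sub, Real.cos_add]; ring
    have a1 : 2*(n:ℝ)*π*x = 2*((n:ℝ)*π*x) := by ring
    have a2 : 2*(m:ℝ)*π*x = 2*((m:ℝ)*π*x) := by ring
    have a3 : ((n:ℝ)-m)*π*x = (n:ℝ)*π*x - (m:ℝ)*π*x := by ring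
    have a4 : ((n:ℝ)+m)*π*x = (n:ℝ)*π*x + (m:ℝ)*π*x := by ring
    rw [a1, a2, a3, a4]
    field_simp
    linear_combination (norm := ring_nf) 2*(m:ℝ)^2*e1 + 2*(n:ℝ)^2*e2 + 4*(m:ℝ)*(n:ℝ)*e3
  have hint : IntervalIntegrable
      (fun x => ((m:ℝ) * Real.sin (n*π*x) + n * Real.sin (m*π*x))^2) MeasureTheory.volume 0 (1/2) := by
    apply Continuous.intervalIntegrable
    have c1 : Continuous fun x:ℝ => Real.sin ((n:ℝ)*π*x) :=
      Real.continuous_sin.comp (continuous_const.mul continuous_id)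
    have c2 : Continuous fun x:ℝ => Real.sin ((m:ℝ)*π*x) :=
      Real.continuous_sin.comp (continuous_const.mul continuous_id)
    exact ((continuous_const.mul c1).add (continuous_const.mul c2)).pow 2
  rw [intervalIntegral.integral_eq_sub_of_hasDerivAt hderiv hint]
  have s1 : Real.sin (2*(n:ℝ)*π*(1/2)) = 0 := by
    have : 2*(n:ℝ)*π*(1/2) = n*π := by ring
    rw [this]; exact Real.sin_nat_mul_pi n
  have s2 : Real.sin (2*(m:ℝ)*π*(1/2)) = 0 := by
    have : 2*(m:ℝ)*π*(1/2) = m*π := by ring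
    rw [this]; exact Real.sin_nat_mul_pi m
  simp only [hF]
  rw [s1, s2]
  have b3 : ((n:ℝ)-m)*π*(1/2) = ((n:ℝ)-m)*π/2 := by ring
  have b4 : ((n:ℝ)+m)*π*(1/2) = ((n:ℝ)+m)*π/2 := by ring
  rw [b3, b4]
  simp
  ring
/-- For positive integers `m ≠ n` with `m + n` odd, the exact formula for the Neumann
data of `u_{mn}` on the left half of the bottom side of the right isosceles triangle. -/
theorem neumann_left_half_formula (m n : ℕ) (hm : 0 < m) (hn : 0 < n) (hne : m ≠ n)
    (hodd : Odd (m + n)) :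
    ∫ x in (0:ℝ)..(1/2), (hmn m n) ^ 2 * (deriv (fun y => u m n x y) 0) ^ 2
      = 1 + (4 * m * n / (Real.pi * ((m : ℝ) ^ 2 + (n : ℝ) ^ 2))) *
          (Real.sin (Real.pi * ((n : ℝ) - m) / 2) / ((n : ℝ) - m)
            - Real.sin (Real.pi * ((n : ℝ) + m) / 2) / ((n : ℝ) + m)) := by
  have hπ : π ≠ 0 := Real.pi_ne_zero
  have hsub : (n:ℝ) - m ≠ 0 := sub_ne_zero.mpr (by exact_mod_cast (Ne.symm hne))
  have hadd : (n:ℝ) + m ≠ 0 := by positivity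
  have hS : ((m:ℝ)^2 + (n:ℝ)^2) ≠ 0 := by positivity
  have hderiv : ∀ x:ℝ, deriv (fun y => u m n x y) 0
      = 2*π*((m:ℝ)*Real.sin ((n:ℝ)*π*x) + n*Real.sin ((m:ℝ)*π*x)) := by
    intro x
    have d1 := hasDerivAt_sin_cmul ((m:ℝ)*π) 0
    have d2 := hasDerivAt_sin_cmul ((n:ℝ)*π) 0
    have D : HasDerivAt (fun y => u m n x y)
        (2*(Real.sin ((n:ℝ)*π*x) * (((m:ℝ)*π) * Real.cos ((m:ℝ)*π*0))
          + eps m n * Real.sin ((m:ℝ)*π*x) * (((n:ℝ)*π) * Real.cos ((n:ℝ)*π*0)))) 0 := by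
      unfold u
      have A := (d1.const_mul (Real.sin ((n:ℝ)*π*x))).add
        (d2.const_mul (eps m n * Real.sin ((m:ℝ)*π*x)))
      have := A.const_mul 2
      convert this using 2 <;> rfl
    rw [D.deriv]
    simp [eps, hodd, mul_zero, Real.cos_zero]
    ring
  have step : ∫ x in (0:ℝ)..(1/2), (hmn m n) ^ 2 * (deriv (fun y => u m n x y) 0) ^ 2
      = (hmn m n ^ 2 * (2*π)^2) *
        ∫ x in (0:ℝ)..(1/2), ((m:ℝ) * Real.sin ((n:ℝ)*π*x) + n * Real.sin ((m:ℝ)*π*x))^2 := by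
    rw [← intervalIntegral.integral_const_mul]
    apply intervalIntegral.integral_congr
    intro x _
    simp only []
    rw [hderiv x]; ring
  rw [step, key m n hm hn hne]
  have hA : (0:ℝ) < π^2*((m:ℝ)^2+(n:ℝ)^2) := by positivity
  have hh : hmn m n ^ 2 = 1/(π^2*((m:ℝ)^2+(n:ℝ)^2)) := by
    unfold hmn; rw [div_pow, one_pow, Real.sq_sqrt hA.le]
  rw [hh,
    show ((n:ℝ)-m)*π/2 = π*((n:ℝ)-m)/2 from by ring,
    show ((n:ℝ)+m)*π/2 = π*((n:ℝ)+m)/2 from by ring]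
  field_simp
  ring
end

section
/- Let m ≠ n be positive integers with m + n even. Then the Neumann data of u_{mn} is equidistributed between the two halves of the bottom side of the right isosceles triangle: ∫₀^{1/2} h_{mn}²·(∂_y u_{mn}(x,0))² dx = 1 = ∫_{1/2}^{1} h_{mn}²·(∂_y u_{mn}(x,0))² dx. -/
open Real MeasureTheory

lemma sin_hda (k : ℝ) (x : ℝ) : HasDerivAt (fun y : ℝ => Real.sin (k * y)) (k * Real.cos (k * x)) x := by
  have h := (Real.hasDerivAt_sin (k * x)).comp x ((hasDerivAt_id x).const_mul k)
  rw [show k * Real.cos (k * x) = Real.cos (k * x) * (k * 1) by ring]; exact h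

-- antiderivative
noncomputable def F (m n : ℕ) (x : ℝ) : ℝ :=
  (4 / ((m:ℝ)^2 + (n:ℝ)^2)) *
    ( ((m:ℝ)^2 + (n:ℝ)^2) * x / 2
      - (m:ℝ)^2 * Real.sin (2 * ((n:ℝ) * Real.pi) * x) / (4 * n * Real.pi)
      - (n:ℝ)^2 * Real.sin (2 * ((m:ℝ) * Real.pi) * x) / (4 * m * Real.pi)
      - (m:ℝ) * n * ( Real.sin ((((n:ℝ) - m) * Real.pi) * x) / (((n:ℝ) - m) * Real.pi)
                    - Real.sin ((((n:ℝ) + m) * Real.pi) * x) / (((n:ℝ) + m) * Real.pi) ) )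

lemma F_hasDerivAt (m n : ℕ) (hm : 0 < m) (hn : 0 < n) (hne : m ≠ n) (x : ℝ) :
    HasDerivAt (F m n)
      ((4 / ((m:ℝ)^2 + (n:ℝ)^2)) *
        ((m:ℝ) * Real.sin ((n:ℝ) * Real.pi * x) - (n:ℝ) * Real.sin ((m:ℝ) * Real.pi * x))^2) x := by
  have hmR : (0:ℝ) < m := by exact_mod_cast hm
  have hnR : (0:ℝ) < n := by exact_mod_cast hn
  have hnm : (n:ℝ) - m ≠ 0 := by
    have : (n:ℝ) ≠ m := by exact_mod_cast (Ne.symm hne)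
    intro h; apply this; linarith
  have hpi := Real.pi_ne_zero
  have h1 := ((sin_hda (2 * ((n:ℝ) * Real.pi)) x).div_const (4 * n * Real.pi)).const_mul ((m:ℝ)^2)
  have h2 := ((sin_hda (2 * ((m:ℝ) * Real.pi)) x).div_const (4 * m * Real.pi)).const_mul ((n:ℝ)^2)
  have h3 := (sin_hda (((n:ℝ) - m) * Real.pi) x).div_const (((n:ℝ) - m) * Real.pi)
  have h4 := (sin_hda (((n:ℝ) + m) * Real.pi) x).div_const (((n:ℝ) + m) * Real.pi)
  have h5 := ((h3.sub h4).const_mul ((m:ℝ) * n))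
  have hx : HasDerivAt (fun x : ℝ => ((m:ℝ)^2 + (n:ℝ)^2) * x / 2)
      (((m:ℝ)^2 + (n:ℝ)^2) / 2) x := by
    simpa using ((hasDerivAt_id x).const_mul (((m:ℝ)^2 + (n:ℝ)^2))).div_const 2
  have H := (((hx.sub h1).sub h2).sub h5).const_mul (4 / ((m:ℝ)^2 + (n:ℝ)^2))
  have key : (4 / ((m:ℝ)^2 + (n:ℝ)^2)) *
        ((((m:ℝ)^2 + (n:ℝ)^2) / 2
          - (m:ℝ)^2 * (2 * ((n:ℝ) * Real.pi) * Real.cos (2 * ((n:ℝ) * Real.pi) * x) / (4 * n * Real.pi))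
          - (n:ℝ)^2 * (2 * ((m:ℝ) * Real.pi) * Real.cos (2 * ((m:ℝ) * Real.pi) * x) / (4 * m * Real.pi))
          - (m:ℝ) * n * ((((n:ℝ) - m) * Real.pi) * Real.cos ((((n:ℝ) - m) * Real.pi) * x) / (((n:ℝ) - m) * Real.pi)
            - (((n:ℝ) + m) * Real.pi) * Real.cos ((((n:ℝ) + m) * Real.pi) * x) / (((n:ℝ) + m) * Real.pi))))
      = (4 / ((m:ℝ)^2 + (n:ℝ)^2)) *
        ((m:ℝ) * Real.sin ((n:ℝ) * Real.pi * x) - (n:ℝ) * Real.sin ((m:ℝ) * Real.pi * x))^2 := by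
    have hnmpi : ((n:ℝ) - m) * Real.pi ≠ 0 := mul_ne_zero hnm hpi
    have hnppi : ((n:ℝ) + m) * Real.pi ≠ 0 := mul_ne_zero (by positivity) hpi
    have e1 : (m:ℝ)^2 * (2 * ((n:ℝ) * Real.pi) * Real.cos (2 * ((n:ℝ) * Real.pi) * x) / (4 * n * Real.pi))
        = (m:ℝ)^2 * Real.cos (2 * ((n:ℝ) * Real.pi) * x) / 2 := by
      field_simp; ring
    have e2 : (n:ℝ)^2 * (2 * ((m:ℝ) * Real.pi) * Real.cos (2 * ((m:ℝ) * Real.pi) * x) / (4 * m * Real.pi))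
        = (n:ℝ)^2 * Real.cos (2 * ((m:ℝ) * Real.pi) * x) / 2 := by
      field_simp; ring
    have e3 : (((n:ℝ) - m) * Real.pi) * Real.cos ((((n:ℝ) - m) * Real.pi) * x) / (((n:ℝ) - m) * Real.pi)
        = Real.cos ((((n:ℝ) - m) * Real.pi) * x) := by
      exact mul_div_cancel_left₀ _ hnmpi
    have e4 : (((n:ℝ) + m) * Real.pi) * Real.cos ((((n:ℝ) + m) * Real.pi) * x) / (((n:ℝ) + m) * Real.pi)
        = Real.cos ((((n:ℝ) + m) * Real.pi) * x) := by
      exact mul_div_cancel_left₀ _ hnppi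
    rw [e1, e2, e3, e4]
    congr 1
    -- trig identities
    have s1 : Real.cos (2 * ((n:ℝ) * Real.pi) * x) = 1 - 2 * Real.sin ((n:ℝ) * Real.pi * x)^2 := by
      rw [show 2 * ((n:ℝ) * Real.pi) * x = 2 * ((n:ℝ) * Real.pi * x) by ring, Real.cos_two_mul']
      ring_nf
      rw [Real.cos_sq']
      ring
    have s2 : Real.cos (2 * ((m:ℝ) * Real.pi) * x) = 1 - 2 * Real.sin ((m:ℝ) * Real.pi * x)^2 := by
      rw [show 2 * ((m:ℝ) * Real.pi) * x = 2 * ((m:ℝ) * Real.pi * x) by ring, Real.cos_two_mul']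
      ring_nf
      rw [Real.cos_sq']
      ring
    have s3 : Real.cos ((((n:ℝ) - m) * Real.pi) * x) - Real.cos ((((n:ℝ) + m) * Real.pi) * x)
        = 2 * Real.sin ((n:ℝ) * Real.pi * x) * Real.sin ((m:ℝ) * Real.pi * x) := by
      rw [show (((n:ℝ) - m) * Real.pi) * x = (n:ℝ) * Real.pi * x - (m:ℝ) * Real.pi * x by ring,
          show (((n:ℝ) + m) * Real.pi) * x = (n:ℝ) * Real.pi * x + (m:ℝ) * Real.pi * x by ring,
          Real.cos_sub, Real.cos_add]
      ring
    linear_combination (-(m:ℝ)^2/2) * s1 + (-(n:ℝ)^2/2) * s2 + (-(m:ℝ)*n) * s3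
  rw [← key]
  unfold F
  refine H.congr_of_eventuallyEq (Filter.Eventually.of_forall fun y => ?_)
  simp only [Pi.sub_apply]
  ring

lemma sin_hda0 (k : ℕ) : HasDerivAt (fun y : ℝ => Real.sin ((k:ℝ) * Real.pi * y)) ((k:ℝ) * Real.pi) 0 := by
  simpa using sin_hda ((k:ℝ) * Real.pi) 0

lemma deriv_u (m n : ℕ) (x : ℝ) :
    deriv (fun y => u m n x y) 0
      = 2 * (Real.sin (n * Real.pi * x) * (m * Real.pi)
          + eps m n * Real.sin (m * Real.pi * x) * (n * Real.pi)) := by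
  have h : HasDerivAt (fun y => u m n x y)
      (2 * (Real.sin (n * Real.pi * x) * (m * Real.pi)
          + eps m n * Real.sin (m * Real.pi * x) * (n * Real.pi))) 0 := by
    unfold u
    have h1 := (sin_hda0 m).const_mul (Real.sin ((n:ℝ) * Real.pi * x))
    have h2 := ((sin_hda0 n).const_mul (Real.sin ((m:ℝ) * Real.pi * x))).const_mul (eps m n)
    have := ((h1.add h2).const_mul (2:ℝ))
    refine (this.congr_of_eventuallyEq (Filter.Eventually.of_forall fun y => ?_)).congr_deriv ?_
    · simp only [Pi.add_apply]; ring
    · ring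
  exact h.deriv

set_option maxHeartbeats 1000000 in
/-- For positive integers `m ≠ n` with `m + n` even, the Neumann data of `u_{mn}` is
equidistributed between the two halves of the bottom side of the right isosceles
triangle. -/
theorem neumann_halves_even (m n : ℕ) (hm : 0 < m) (hn : 0 < n) (hne : m ≠ n)
    (heven : Even (m + n)) :
    (∫ x in (0:ℝ)..(1/2), (hmn m n) ^ 2 * (deriv (fun y => u m n x y) 0) ^ 2 = 1) ∧
    (∫ x in (1/2:ℝ)..1, (hmn m n) ^ 2 * (deriv (fun y => u m n x y) 0) ^ 2 = 1) := by
  have hmR : (0:ℝ) < m := by exact_mod_cast hm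
  have hnR : (0:ℝ) < n := by exact_mod_cast hn
  have hS : ((m:ℝ)^2 + (n:ℝ)^2) ≠ 0 := by positivity
  have hπ := Real.pi_ne_zero
  have heps : eps m n = -1 := by
    rw [eps, if_neg]; exact (Nat.not_odd_iff_even).mpr heven
  have key : ∀ x : ℝ, hmn m n ^ 2 * (deriv (fun y => u m n x y) 0) ^ 2
      = (4 / ((m:ℝ)^2 + (n:ℝ)^2)) *
        ((m:ℝ) * Real.sin ((n:ℝ) * Real.pi * x) - (n:ℝ) * Real.sin ((m:ℝ) * Real.pi * x)) ^ 2 := by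
    intro x
    rw [deriv_u, heps]
    have hh : hmn m n ^ 2 = 1 / (Real.pi ^ 2 * ((m:ℝ)^2 + (n:ℝ)^2)) := by
      rw [hmn, div_pow, one_pow, Real.sq_sqrt (by positivity)]
    rw [hh]
    field_simp
    ring
  have hint : ∀ a b : ℝ,
      ∫ x in a..b, hmn m n ^ 2 * (deriv (fun y => u m n x y) 0) ^ 2 = F m n b - F m n a := by
    intro a b
    rw [intervalIntegral.integral_congr (g := fun x => (4 / ((m:ℝ)^2 + (n:ℝ)^2)) *
        ((m:ℝ) * Real.sin ((n:ℝ) * Real.pi * x) - (n:ℝ) * Real.sin ((m:ℝ) * Real.pi * x)) ^ 2)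
        (fun x _ => key x)]
    exact intervalIntegral.integral_eq_sub_of_hasDerivAt
      (fun x _ => F_hasDerivAt m n hm hn hne x)
      (Continuous.intervalIntegrable (by fun_prop) a b)
  obtain ⟨k, hk⟩ := heven
  have hkR : (m:ℝ) + (n:ℝ) = 2 * (k:ℝ) := by
    have h : (m:ℝ) + (n:ℝ) = (k:ℝ) + (k:ℝ) := by exact_mod_cast hk
    linarith
  have z1 : Real.sin (2 * ((n:ℝ) * Real.pi) * (1/2)) = 0 := by
    rw [show 2 * ((n:ℝ) * Real.pi) * (1/2) = n * Real.pi by ring]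
    exact Real.sin_nat_mul_pi n
  have z2 : Real.sin (2 * ((m:ℝ) * Real.pi) * (1/2)) = 0 := by
    rw [show 2 * ((m:ℝ) * Real.pi) * (1/2) = m * Real.pi by ring]
    exact Real.sin_nat_mul_pi m
  have z3 : Real.sin (((n:ℝ) - m) * Real.pi * (1/2)) = 0 := by
    have h := Real.sin_int_mul_pi ((k:ℤ) - (m:ℤ))
    push_cast at h
    rw [show ((n:ℝ) - m) * Real.pi * (1/2) = ((k:ℝ) - (m:ℝ)) * Real.pi by
      linear_combination (Real.pi/2) * hkR]
    exact h
  have z4 : Real.sin (((n:ℝ) + m) * Real.pi * (1/2)) = 0 := by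
    rw [show ((n:ℝ) + m) * Real.pi * (1/2) = (k:ℝ) * Real.pi by
      linear_combination (Real.pi/2) * hkR]
    exact Real.sin_nat_mul_pi k
  have z5 : Real.sin (2 * ((n:ℝ) * Real.pi) * 1) = 0 := by
    rw [show 2 * ((n:ℝ) * Real.pi) * 1 = ((2*n : ℕ):ℝ) * Real.pi by push_cast; ring]
    exact Real.sin_nat_mul_pi (2*n)
  have z6 : Real.sin (2 * ((m:ℝ) * Real.pi) * 1) = 0 := by
    rw [show 2 * ((m:ℝ) * Real.pi) * 1 = ((2*m : ℕ):ℝ) * Real.pi by push_cast; ring]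
    exact Real.sin_nat_mul_pi (2*m)
  have z7 : Real.sin (((n:ℝ) - m) * Real.pi * 1) = 0 := by
    have h := Real.sin_int_mul_pi ((n:ℤ) - (m:ℤ))
    push_cast at h
    rw [show ((n:ℝ) - m) * Real.pi * 1 = ((n:ℝ) - (m:ℝ)) * Real.pi by ring]
    exact h
  have z8 : Real.sin (((n:ℝ) + m) * Real.pi * 1) = 0 := by
    rw [show ((n:ℝ) + m) * Real.pi * 1 = ((n + m : ℕ):ℝ) * Real.pi by push_cast; ring]
    exact Real.sin_nat_mul_pi (n + m)
  have F0 : F m n 0 = 0 := by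
    simp [F]
  have Fhalf : F m n (1/2) = 1 := by
    rw [F, z1, z2, z3, z4]
    field_simp
    ring
  have F1 : F m n 1 = 2 := by
    rw [F, z5, z6, z7, z8]
    field_simp
    ring
  constructor
  · rw [hint, F0, Fhalf]; ring
  · rw [hint, Fhalf, F1]; ring
end

section
/- Along the subsequence (m,n) = (k, k+1), k → ∞, the Neumann data of u_{k,k+1} on the two halves of the bottom side of the right isosceles triangle converges to unequal values: lim_{k→∞} ∫₀^{1/2} h_{k,k+1}²·(∂_y u_{k,k+1}(x,0))² dx = 1 + 2/π and lim_{k→∞} ∫_{1/2}^{1} h_{k,k+1}²·(∂_y u_{k,k+1}(x,0))² dx = 1 − 2/π. -/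
open Real MeasureTheory Filter

lemma cos_nat_pi (k : ℕ) : Real.cos (k * Real.pi) = (-1 : ℝ) ^ k := by
  induction k with
  | zero => simp
  | succ n ih =>
      push_cast
      rw [add_mul, one_mul, Real.cos_add_pi, pow_succ]
      push_cast at ih
      rw [ih]; ring

lemma deriv_u_eq (k : ℕ) (x : ℝ) :
    deriv (fun y => u k (k+1) x y) 0
      = 2 * Real.pi * ((k : ℝ) * Real.sin (((k:ℝ)+1) * Real.pi * x)
          + ((k:ℝ)+1) * Real.sin ((k:ℝ) * Real.pi * x)) := by
  have heps : eps k (k+1) = 1 := by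
    have h : Odd (k + (k+1)) := ⟨k, by ring⟩
    simp [eps, h]
  have h1 : HasDerivAt (fun y : ℝ => Real.sin ((k:ℝ) * Real.pi * y)) ((k:ℝ) * Real.pi) 0 := by
    have := ((hasDerivAt_id (0:ℝ)).const_mul ((k:ℝ) * Real.pi)).sin
    simpa using this
  have h2 : HasDerivAt (fun y : ℝ => Real.sin (((k:ℝ)+1) * Real.pi * y)) (((k:ℝ)+1) * Real.pi) 0 := by
    have := ((hasDerivAt_id (0:ℝ)).const_mul (((k:ℝ)+1) * Real.pi)).sin
    simpa using this
  have hu : HasDerivAt (fun y => u k (k+1) x y)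
      (2 * (Real.sin (((k:ℝ)+1) * Real.pi * x) * ((k:ℝ) * Real.pi)
        + Real.sin ((k:ℝ) * Real.pi * x) * (((k:ℝ)+1) * Real.pi))) 0 := by
    have := ((h1.const_mul (Real.sin (((k:ℝ)+1) * Real.pi * x))).add
      (h2.const_mul (Real.sin ((k:ℝ) * Real.pi * x)))).const_mul (2:ℝ)
    have hfun : (fun y => u k (k+1) x y)
        = fun y => 2 * (Real.sin (((k:ℝ)+1) * Real.pi * x) * Real.sin ((k:ℝ) * Real.pi * y)
            + Real.sin ((k:ℝ) * Real.pi * x) * Real.sin (((k:ℝ)+1) * Real.pi * y)) := by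
      funext y
      simp only [u, heps]
      push_cast
      ring
    rw [hfun]
    exact this
  rw [hu.deriv]; ring

/-- explicit antiderivative -/
noncomputable def G (k : ℕ) (x : ℝ) : ℝ :=
  (k:ℝ)^2 * (x/2 - Real.sin (2*((k:ℝ)+1)*Real.pi*x)/(4*((k:ℝ)+1)*Real.pi))
  + ((k:ℝ)+1)^2 * (x/2 - Real.sin (2*(k:ℝ)*Real.pi*x)/(4*(k:ℝ)*Real.pi))
  + 2*(k:ℝ)*((k:ℝ)+1) * (Real.sin (Real.pi*x)/(2*Real.pi)
      - Real.sin ((2*(k:ℝ)+1)*Real.pi*x)/(2*(2*(k:ℝ)+1)*Real.pi))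

lemma hasDerivAt_G (k : ℕ) (hk : 1 ≤ k) (x : ℝ) :
    HasDerivAt (G k)
      (((k:ℝ) * Real.sin (((k:ℝ)+1)*Real.pi*x) + ((k:ℝ)+1) * Real.sin ((k:ℝ)*Real.pi*x))^2) x := by
  have hkpos : (0:ℝ) < (k:ℝ) := by exact_mod_cast hk
  have hk0 : (k:ℝ) ≠ 0 := ne_of_gt hkpos
  have hk1 : ((k:ℝ)+1) ≠ 0 := by positivity
  have hk2 : (2*(k:ℝ)+1) ≠ 0 := by positivity
  have hπ : Real.pi ≠ 0 := Real.pi_ne_zero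
  have hsin : ∀ c : ℝ, HasDerivAt (fun x : ℝ => Real.sin (c*x)) (Real.cos (c*x) * c) x := by
    intro c
    have := ((hasDerivAt_id x).const_mul c).sin
    simpa using this
  have hmain : HasDerivAt (G k)
      ((k:ℝ)^2 * (1/2 - Real.cos (2*((k:ℝ)+1)*Real.pi*x) * (2*((k:ℝ)+1)*Real.pi) / (4*((k:ℝ)+1)*Real.pi))
       + ((k:ℝ)+1)^2 * (1/2 - Real.cos (2*(k:ℝ)*Real.pi*x) * (2*(k:ℝ)*Real.pi) / (4*(k:ℝ)*Real.pi))
       + 2*(k:ℝ)*((k:ℝ)+1) * (Real.cos (Real.pi*x) * Real.pi / (2*Real.pi)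
          - Real.cos ((2*(k:ℝ)+1)*Real.pi*x) * ((2*(k:ℝ)+1)*Real.pi) / (2*(2*(k:ℝ)+1)*Real.pi))) x := by
    have p1 := (((hasDerivAt_id x).div_const 2).sub ((hsin (2*((k:ℝ)+1)*Real.pi)).div_const
      (4*((k:ℝ)+1)*Real.pi))).const_mul ((k:ℝ)^2)
    have p2 := (((hasDerivAt_id x).div_const 2).sub ((hsin (2*(k:ℝ)*Real.pi)).div_const
      (4*(k:ℝ)*Real.pi))).const_mul (((k:ℝ)+1)^2)
    have p3 := (((hsin Real.pi).div_const (2*Real.pi)).sub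
      ((hsin ((2*(k:ℝ)+1)*Real.pi)).div_const (2*(2*(k:ℝ)+1)*Real.pi))).const_mul (2*(k:ℝ)*((k:ℝ)+1))
    have := (p1.add p2).add p3
    exact this
  convert hmain using 1
  have hc1 : Real.cos (2*((k:ℝ)+1)*Real.pi*x)
      = 1 - 2 * Real.sin (((k:ℝ)+1)*Real.pi*x)^2 := by
    rw [show 2*((k:ℝ)+1)*Real.pi*x = 2*(((k:ℝ)+1)*Real.pi*x) by ring, Real.cos_two_mul']
    have := Real.sin_sq_add_cos_sq (((k:ℝ)+1)*Real.pi*x)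
    linarith
  have hc2 : Real.cos (2*(k:ℝ)*Real.pi*x) = 1 - 2 * Real.sin ((k:ℝ)*Real.pi*x)^2 := by
    rw [show 2*(k:ℝ)*Real.pi*x = 2*((k:ℝ)*Real.pi*x) by ring, Real.cos_two_mul']
    have := Real.sin_sq_add_cos_sq ((k:ℝ)*Real.pi*x)
    linarith
  have hc3 : Real.cos ((2*(k:ℝ)+1)*Real.pi*x)
      = Real.cos (((k:ℝ)+1)*Real.pi*x) * Real.cos ((k:ℝ)*Real.pi*x)
        - Real.sin (((k:ℝ)+1)*Real.pi*x) * Real.sin ((k:ℝ)*Real.pi*x) := by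
    rw [show (2*(k:ℝ)+1)*Real.pi*x = ((k:ℝ)+1)*Real.pi*x + (k:ℝ)*Real.pi*x by ring, Real.cos_add]
  have hc4 : Real.cos (Real.pi*x)
      = Real.cos (((k:ℝ)+1)*Real.pi*x) * Real.cos ((k:ℝ)*Real.pi*x)
        + Real.sin (((k:ℝ)+1)*Real.pi*x) * Real.sin ((k:ℝ)*Real.pi*x) := by
    rw [show Real.pi*x = ((k:ℝ)+1)*Real.pi*x - (k:ℝ)*Real.pi*x by ring, Real.cos_sub]
  rw [hc1, hc2, hc3, hc4]
  field_simp
  ring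

lemma G_integral (k : ℕ) (hk : 1 ≤ k) (a b : ℝ) :
    ∫ x in a..b, ((k:ℝ) * Real.sin (((k:ℝ)+1)*Real.pi*x) + ((k:ℝ)+1) * Real.sin ((k:ℝ)*Real.pi*x))^2
      = G k b - G k a := by
  refine intervalIntegral.integral_eq_sub_of_hasDerivAt (fun x _ => hasDerivAt_G k hk x) ?_
  apply Continuous.intervalIntegrable
  fun_prop

lemma G_zero (k : ℕ) : G k 0 = 0 := by simp [G]

lemma G_one (k : ℕ) : G k 1 = (k:ℝ)^2/2 + ((k:ℝ)+1)^2/2 := by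
  have s1 : Real.sin (2*((k:ℝ)+1)*Real.pi*1) = 0 := by
    rw [show 2*((k:ℝ)+1)*Real.pi*1 = ((2*(k+1) : ℕ) : ℝ) * Real.pi by push_cast; ring]
    exact Real.sin_nat_mul_pi _
  have s2 : Real.sin (2*(k:ℝ)*Real.pi*1) = 0 := by
    rw [show 2*(k:ℝ)*Real.pi*1 = ((2*k : ℕ) : ℝ) * Real.pi by push_cast; ring]
    exact Real.sin_nat_mul_pi _
  have s3 : Real.sin (Real.pi*1) = 0 := by simp
  have s4 : Real.sin ((2*(k:ℝ)+1)*Real.pi*1) = 0 := by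
    rw [show (2*(k:ℝ)+1)*Real.pi*1 = ((2*k+1 : ℕ) : ℝ) * Real.pi by push_cast; ring]
    exact Real.sin_nat_mul_pi _
  simp only [G, s1, s2, s3, s4]
  ring

lemma G_half (k : ℕ) : G k (1/2)
    = (k:ℝ)^2/4 + ((k:ℝ)+1)^2/4
      + 2*(k:ℝ)*((k:ℝ)+1) * (1/(2*Real.pi) - (-1:ℝ)^k/(2*(2*(k:ℝ)+1)*Real.pi)) := by
  have s1 : Real.sin (2*((k:ℝ)+1)*Real.pi*(1/2)) = 0 := by
    rw [show 2*((k:ℝ)+1)*Real.pi*(1/2) = (((k+1) : ℕ) : ℝ) * Real.pi by push_cast; ring]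
    exact Real.sin_nat_mul_pi _
  have s2 : Real.sin (2*(k:ℝ)*Real.pi*(1/2)) = 0 := by
    rw [show 2*(k:ℝ)*Real.pi*(1/2) = ((k : ℕ) : ℝ) * Real.pi by push_cast; ring]
    exact Real.sin_nat_mul_pi _
  have s3 : Real.sin (Real.pi*(1/2)) = 1 := by
    rw [show Real.pi*(1/2) = Real.pi/2 by ring]
    exact Real.sin_pi_div_two
  have s4 : Real.sin ((2*(k:ℝ)+1)*Real.pi*(1/2)) = (-1:ℝ)^k := by
    rw [show (2*(k:ℝ)+1)*Real.pi*(1/2) = (k:ℝ)*Real.pi + Real.pi/2 by ring,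
      Real.sin_add_pi_div_two, cos_nat_pi]
  simp only [G, s1, s2, s3, s4]
  ring

/-- closed form of the first-half integral -/
noncomputable def g1 (k : ℕ) : ℝ :=
  1 + (4/Real.pi) * (((k:ℝ)*((k:ℝ)+1))/((k:ℝ)^2+((k:ℝ)+1)^2)) * (1 - (-1:ℝ)^k/(2*(k:ℝ)+1))

lemma hmn_sq (k : ℕ) : (hmn k (k+1))^2 = 1/(Real.pi^2 * ((k:ℝ)^2 + ((k:ℝ)+1)^2)) := by
  have hpos : (0:ℝ) ≤ Real.pi^2 * (((k:ℕ):ℝ)^2 + (((k+1:ℕ)):ℝ)^2) := by positivity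
  rw [hmn, div_pow, one_pow, Real.sq_sqrt hpos]
  norm_num

lemma integral1_eq (k : ℕ) (hk : 1 ≤ k) :
    (∫ x in (0:ℝ)..(1/2),
        (hmn k (k+1)) ^ 2 * (deriv (fun y => u k (k+1) x y) 0) ^ 2) = g1 k := by
  have hkpos : (0:ℝ) < (k:ℝ) := by exact_mod_cast hk
  have hD : ((k:ℝ)^2+((k:ℝ)+1)^2) ≠ 0 := by positivity
  have hπ : Real.pi ≠ 0 := Real.pi_ne_zero
  have hk2 : (2*(k:ℝ)+1) ≠ 0 := by positivity
  rw [intervalIntegral.integral_congr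
    (g := fun x => (4/((k:ℝ)^2+((k:ℝ)+1)^2)) *
      (((k:ℝ) * Real.sin (((k:ℝ)+1)*Real.pi*x) + ((k:ℝ)+1) * Real.sin ((k:ℝ)*Real.pi*x))^2))
    (fun x _ => by rw [deriv_u_eq, hmn_sq]; field_simp; ring)]
  rw [intervalIntegral.integral_const_mul, G_integral k hk, G_half, G_zero, g1]
  field_simp
  ring

lemma integral2_eq (k : ℕ) (hk : 1 ≤ k) :
    (∫ x in (1/2:ℝ)..1,
        (hmn k (k+1)) ^ 2 * (deriv (fun y => u k (k+1) x y) 0) ^ 2) = 2 - g1 k := by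
  have hkpos : (0:ℝ) < (k:ℝ) := by exact_mod_cast hk
  have hD : ((k:ℝ)^2+((k:ℝ)+1)^2) ≠ 0 := by positivity
  have hπ : Real.pi ≠ 0 := Real.pi_ne_zero
  have hk2 : (2*(k:ℝ)+1) ≠ 0 := by positivity
  rw [intervalIntegral.integral_congr
    (g := fun x => (4/((k:ℝ)^2+((k:ℝ)+1)^2)) *
      (((k:ℝ) * Real.sin (((k:ℝ)+1)*Real.pi*x) + ((k:ℝ)+1) * Real.sin ((k:ℝ)*Real.pi*x))^2))
    (fun x _ => by rw [deriv_u_eq, hmn_sq]; field_simp; ring)]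
  rw [intervalIntegral.integral_const_mul, G_integral k hk, G_one, G_half, g1]
  field_simp
  ring

lemma tendsto_a : Tendsto (fun k : ℕ => ((k:ℝ)*((k:ℝ)+1))/((k:ℝ)^2+((k:ℝ)+1)^2))
    atTop (nhds (1/2)) := by
  have h0 : Tendsto (fun k : ℕ => 1/(k:ℝ)) atTop (nhds 0) := tendsto_one_div_atTop_nhds_zero_nat
  have hmain : Tendsto (fun k : ℕ => (1+1/(k:ℝ))/(2+2*(1/(k:ℝ))+(1/(k:ℝ))^2))
      atTop (nhds ((1+0)/(2+2*0+0^2))) := by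
    exact Tendsto.div (tendsto_const_nhds.add h0)
      ((tendsto_const_nhds.add (tendsto_const_nhds.mul h0)).add (h0.pow 2)) (by norm_num)
  have hmain' : Tendsto (fun k : ℕ => (1+1/(k:ℝ))/(2+2*(1/(k:ℝ))+(1/(k:ℝ))^2))
      atTop (nhds (1/2)) := by
    convert hmain using 2; norm_num
  refine Tendsto.congr' ?_ hmain'
  filter_upwards [eventually_ge_atTop 1] with k hk
  have hkpos : (0:ℝ) < (k:ℝ) := by exact_mod_cast hk
  have hD : ((k:ℝ)^2+((k:ℝ)+1)^2) ≠ 0 := by positivity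
  field_simp
  ring

lemma tendsto_b : Tendsto (fun k : ℕ => (-1:ℝ)^k/(2*(k:ℝ)+1)) atTop (nhds 0) := by
  have hbig : Tendsto (fun k : ℕ => 2*(k:ℝ)+1) atTop atTop := by
    apply Filter.tendsto_atTop_add_const_right
    exact Tendsto.const_mul_atTop (by norm_num) tendsto_natCast_atTop_atTop
  apply squeeze_zero_norm (a := fun k : ℕ => 1/(2*(k:ℝ)+1))
  · intro n
    have h1 : |2*(n:ℝ)+1| = 2*(n:ℝ)+1 := abs_of_pos (by positivity)
    rw [Real.norm_eq_abs, abs_div, abs_pow, abs_neg, abs_one, one_pow, h1]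
  · simpa [one_div, Function.comp_def] using tendsto_inv_atTop_zero.comp hbig

lemma tendsto_g1 : Tendsto g1 atTop (nhds (1 + 2/Real.pi)) := by
  have h : Tendsto (fun k : ℕ => (1:ℝ) + 4/Real.pi *
        (((k:ℝ)*((k:ℝ)+1))/((k:ℝ)^2+((k:ℝ)+1)^2)) * (1 - (-1:ℝ)^k/(2*(k:ℝ)+1)))
      atTop (nhds (1 + 4/Real.pi * (1/2) * (1-0))) :=
    tendsto_const_nhds.add ((tendsto_const_nhds.mul tendsto_a).mul
      (tendsto_const_nhds.sub tendsto_b))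
  have hval : (1:ℝ) + 4/Real.pi * (1/2) * (1-0) = 1 + 2/Real.pi := by ring
  rw [hval] at h
  exact h.congr (fun k => by simp only [g1])

/-- Along the subsequence `(m,n) = (k, k+1)`, the Neumann data of `u_{k,k+1}` on the two
halves of the bottom side converges to the unequal values `1 + 2/π` and `1 - 2/π`. -/
theorem neumann_halves_limit_k_kplus1 :
    Tendsto (fun k : ℕ =>
        ∫ x in (0:ℝ)..(1/2),
          (hmn k (k+1)) ^ 2 * (deriv (fun y => u k (k+1) x y) 0) ^ 2)
      atTop (nhds (1 + 2 / Real.pi)) ∧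
    Tendsto (fun k : ℕ =>
        ∫ x in (1/2:ℝ)..1,
          (hmn k (k+1)) ^ 2 * (deriv (fun y => u k (k+1) x y) 0) ^ 2)
      atTop (nhds (1 - 2 / Real.pi)) := by
  constructor
  · refine Tendsto.congr' ?_ tendsto_g1
    filter_upwards [eventually_ge_atTop 1] with k hk
    exact (integral1_eq k hk).symm
  · have h : Tendsto (fun k : ℕ => 2 - g1 k) atTop (nhds (2 - (1 + 2/Real.pi))) :=
      tendsto_const_nhds.sub tendsto_g1
    have hval : (2:ℝ) - (1 + 2/Real.pi) = 1 - 2/Real.pi := by ring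
    rw [hval] at h
    refine Tendsto.congr' ?_ h
    filter_upwards [eventually_ge_atTop 1] with k hk
    exact (integral2_eq k hk).symm
end

section
/- Let Ω be the right triangle {(x,y) : 0 ≤ x ≤ a, 0 ≤ y ≤ 1 − x/a} with a > 0, and suppose h > 0 and u is real-valued, C² on an open neighborhood of Ω, satisfies −h²Δu = u on Ω, u = 0 on ∂Ω, and ∫_Ω u² dV = 1. Then the interior x-energy is given by the weighted boundary integral over the hypotenuse: 2∫_Ω |h ∂_x u|² dV = (1/a)·∫₀^a x·|h ∂_ν u(x, 1−x/a)|² dx, where ∂_ν u = γ^{−1}(∂_x u + a ∂_y u) with γ = (1+a²)^{1/2} is the outward normal derivative on the hypotenuse. -/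
open Real MeasureTheory Set

/-- The right triangle `Ω = {(x,y) : 0 ≤ x ≤ a, 0 ≤ y ≤ 1 - x/a}`. -/
def Omg (a : ℝ) : Set (ℝ × ℝ) :=
  {p | 0 ≤ p.1 ∧ p.1 ≤ a ∧ 0 ≤ p.2 ∧ p.2 ≤ 1 - p.1 / a}

lemma omg_isClosed (a : ℝ) : IsClosed (Omg a) := by
  have : Omg a = {p : ℝ × ℝ | 0 ≤ p.1} ∩ ({p | p.1 ≤ a} ∩
      ({p | 0 ≤ p.2} ∩ {p | p.2 ≤ 1 - p.1 / a})) := rfl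
  rw [this]
  exact (isClosed_le continuous_const continuous_fst).inter
    ((isClosed_le continuous_fst continuous_const).inter
      ((isClosed_le continuous_const continuous_snd).inter
        (isClosed_le continuous_snd (continuous_const.sub (continuous_fst.div_const a)))))

lemma omg_subset_Icc {a : ℝ} (ha : 0 < a) : Omg a ⊆ Icc ((0:ℝ),(0:ℝ)) (a,1) := by
  rintro ⟨x, y⟩ ⟨h1, h2, h3, h4⟩
  have hxa : 0 ≤ x / a := div_nonneg h1 ha.le
  exact ⟨⟨h1, h3⟩, ⟨h2, h4.trans (by linarith)⟩⟩

lemma omg_isCompact {a : ℝ} (ha : 0 < a) : IsCompact (Omg a) :=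
  isCompact_Icc.of_isClosed_subset (omg_isClosed a) (omg_subset_Icc ha)

lemma omg_fubini_y {a : ℝ} (ha : 0 < a) {F : ℝ × ℝ → ℝ}
    (hF : IntegrableOn F (Omg a)) :
    ∫ p in Omg a, F p = ∫ x in (0:ℝ)..a, ∫ y in (0:ℝ)..(1 - x / a), F (x, y) := by
  have hmeas := (omg_isClosed a).measurableSet
  rw [← integral_indicator hmeas]
  have hind : Integrable ((Omg a).indicator F) := (integrable_indicator_iff hmeas).2 hF
  have hprod : Integrable ((Omg a).indicator F) ((volume : Measure ℝ).prod volume) := by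
    rwa [← MeasureTheory.Measure.volume_eq_prod]
  rw [show (volume : Measure (ℝ × ℝ)) = (volume : Measure ℝ).prod volume from MeasureTheory.Measure.volume_eq_prod ℝ ℝ,
    integral_prod _ hprod]
  have hslice : ∀ x : ℝ, (∫ y, (Omg a).indicator F (x, y))
      = (Icc (0:ℝ) a).indicator (fun x => ∫ y in (0:ℝ)..(1 - x / a), F (x, y)) x := by
    intro x
    by_cases hx : x ∈ Icc (0:ℝ) a
    · rw [indicator_of_mem hx]
      have h0le : (0:ℝ) ≤ 1 - x / a := by
        have : x / a ≤ 1 := (div_le_one ha).2 hx.2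
        linarith
      have hpt : ∀ y, (Omg a).indicator F (x, y)
          = (Icc (0:ℝ) (1 - x / a)).indicator (fun y => F (x, y)) y := by
        intro y
        by_cases hy : y ∈ Icc (0:ℝ) (1 - x / a)
        · rw [indicator_of_mem hy, indicator_of_mem (show (x,y) ∈ Omg a from ⟨hx.1, hx.2, hy.1, hy.2⟩)]
        · rw [indicator_of_notMem hy, indicator_of_notMem]
          rintro ⟨-, -, h3, h4⟩
          exact hy ⟨h3, h4⟩
      simp_rw [hpt]
      rw [integral_indicator measurableSet_Icc, integral_Icc_eq_integral_Ioc,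
        ← intervalIntegral.integral_of_le h0le]
    · rw [indicator_of_notMem hx]
      have hpt : ∀ y, (Omg a).indicator F (x, y) = 0 := by
        intro y
        exact indicator_of_notMem (fun hmem => hx ⟨hmem.1, hmem.2.1⟩) _
      simp [hpt]
  simp_rw [hslice]
  rw [integral_indicator measurableSet_Icc, integral_Icc_eq_integral_Ioc,
    ← intervalIntegral.integral_of_le ha.le]

lemma omg_fubini_x {a : ℝ} (ha : 0 < a) {F : ℝ × ℝ → ℝ}
    (hF : IntegrableOn F (Omg a)) :
    ∫ p in Omg a, F p = ∫ y in (0:ℝ)..1, ∫ x in (0:ℝ)..(a * (1 - y)), F (x, y) := by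
  have hmeas := (omg_isClosed a).measurableSet
  rw [← integral_indicator hmeas]
  have hind : Integrable ((Omg a).indicator F) := (integrable_indicator_iff hmeas).2 hF
  have hprod : Integrable ((Omg a).indicator F) ((volume : Measure ℝ).prod volume) := by
    rwa [← MeasureTheory.Measure.volume_eq_prod]
  rw [show (volume : Measure (ℝ × ℝ)) = (volume : Measure ℝ).prod volume from MeasureTheory.Measure.volume_eq_prod ℝ ℝ,
    integral_prod_symm _ hprod]
  have hslice : ∀ y : ℝ, (∫ x, (Omg a).indicator F (x, y))
      = (Icc (0:ℝ) 1).indicator (fun y => ∫ x in (0:ℝ)..(a * (1 - y)), F (x, y)) y := by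
    intro y
    by_cases hy : y ∈ Icc (0:ℝ) 1
    · rw [indicator_of_mem hy]
      have h0le : (0:ℝ) ≤ a * (1 - y) := by
        have : (0:ℝ) ≤ 1 - y := by linarith [hy.2]
        positivity
      have hpt : ∀ x, (Omg a).indicator F (x, y)
          = (Icc (0:ℝ) (a * (1 - y))).indicator (fun x => F (x, y)) x := by
        intro x
        by_cases hx : x ∈ Icc (0:ℝ) (a * (1 - y))
        · rw [indicator_of_mem hx, indicator_of_mem]
          have hxa : x ≤ a := hx.2.trans (by nlinarith [hy.1])
          have : y ≤ 1 - x / a := by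
            rw [le_sub_iff_add_le, ← le_sub_iff_add_le', div_le_iff₀ ha]
            nlinarith [hx.2]
          exact ⟨hx.1, hxa, hy.1, this⟩
        · rw [indicator_of_notMem hx, indicator_of_notMem]
          rintro ⟨h1, h2, h3, h4⟩
          apply hx
          refine ⟨h1, ?_⟩
          rw [le_sub_iff_add_le, ← le_sub_iff_add_le', div_le_iff₀ ha] at h4
          nlinarith
      simp_rw [hpt]
      rw [integral_indicator measurableSet_Icc, integral_Icc_eq_integral_Ioc,
        ← intervalIntegral.integral_of_le h0le]
    · rw [indicator_of_notMem hy]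
      have hpt : ∀ x, (Omg a).indicator F (x, y) = 0 := by
        intro x
        apply indicator_of_notMem _ _
        rintro ⟨h1, h2, h3, h4⟩
        apply hy
        have hxa : 0 ≤ x / a := div_nonneg h1 ha.le
        exact ⟨h3, h4.trans (by linarith)⟩
      simp [hpt]
  simp_rw [hslice]
  rw [integral_indicator measurableSet_Icc, integral_Icc_eq_integral_Ioc,
    ← intervalIntegral.integral_of_le zero_le_one]

lemma hasDerivAt_slice_x {g : ℝ × ℝ → ℝ} {p : ℝ × ℝ} (hg : DifferentiableAt ℝ g p) :
    HasDerivAt (fun t => g (t, p.2)) (fderiv ℝ g p (1, 0)) p.1 := by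
  have hcurve : HasDerivAt (fun t : ℝ => ((t, p.2) : ℝ × ℝ)) (((1:ℝ), (0:ℝ))) p.1 :=
    (hasDerivAt_id p.1).prodMk (hasDerivAt_const p.1 p.2)
  exact hg.hasFDerivAt.comp_hasDerivAt p.1 hcurve

lemma hasDerivAt_slice_y {g : ℝ × ℝ → ℝ} {p : ℝ × ℝ} (hg : DifferentiableAt ℝ g p) :
    HasDerivAt (fun t => g (p.1, t)) (fderiv ℝ g p (0, 1)) p.2 := by
  have hcurve : HasDerivAt (fun t : ℝ => ((p.1, t) : ℝ × ℝ)) (((0:ℝ), (1:ℝ))) p.2 :=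
    (hasDerivAt_const p.2 p.1).prodMk (hasDerivAt_id p.2)
  exact hg.hasFDerivAt.comp_hasDerivAt p.2 hcurve

lemma omg_divY {a : ℝ} (ha : 0 < a) {U : Set (ℝ × ℝ)} (hU : IsOpen U) (hΩU : Omg a ⊆ U)
    {g : ℝ × ℝ → ℝ} (hg : ContDiffOn ℝ 1 g U) :
    ∫ p in Omg a, fderiv ℝ g p (0, 1)
      = ∫ x in (0:ℝ)..a, (g (x, 1 - x / a) - g (x, 0)) := by
  have hgd : ∀ p ∈ U, DifferentiableAt ℝ g p := fun p hp =>
    (hg.contDiffAt (hU.mem_nhds hp)).differentiableAt one_ne_zero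
  have hfcont : ContinuousOn (fun p => fderiv ℝ g p (0, 1)) U := by
    have h1 : ContinuousOn (fderiv ℝ g) U := hg.continuousOn_fderiv_of_isOpen hU le_rfl
    exact (ContinuousLinearMap.apply ℝ ℝ (((0:ℝ),(1:ℝ)))).continuous.comp_continuousOn h1
  have hint : IntegrableOn (fun p => fderiv ℝ g p (0, 1)) (Omg a) :=
    (hfcont.mono hΩU).integrableOn_compact (omg_isCompact ha)
  rw [omg_fubini_y ha hint]
  apply intervalIntegral.integral_congr
  intro x hx
  rw [uIcc_of_le ha.le] at hx
  have h0le : (0:ℝ) ≤ 1 - x / a := by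
    have : x / a ≤ 1 := (div_le_one ha).2 hx.2
    linarith
  have hmem : ∀ y ∈ Set.uIcc (0:ℝ) (1 - x / a), ((x, y) : ℝ × ℝ) ∈ U := by
    intro y hy
    rw [uIcc_of_le h0le] at hy
    exact hΩU ⟨hx.1, hx.2, hy.1, hy.2⟩
  have hcurve : Continuous (fun y : ℝ => ((x, y) : ℝ × ℝ)) := by continuity
  exact intervalIntegral.integral_eq_sub_of_hasDerivAt
    (f := fun y => g (x, y)) (f' := fun y => fderiv ℝ g (x, y) (0, 1))
    (fun y hy => hasDerivAt_slice_y (hgd _ (hmem y hy)))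
    ((hfcont.comp hcurve.continuousOn hmem).intervalIntegrable)

lemma omg_divX {a : ℝ} (ha : 0 < a) {U : Set (ℝ × ℝ)} (hU : IsOpen U) (hΩU : Omg a ⊆ U)
    {g : ℝ × ℝ → ℝ} (hg : ContDiffOn ℝ 1 g U) :
    ∫ p in Omg a, fderiv ℝ g p (1, 0)
      = (1 / a) * (∫ x in (0:ℝ)..a, g (x, 1 - x / a)) - ∫ y in (0:ℝ)..1, g (0, y) := by
  have hgd : ∀ p ∈ U, DifferentiableAt ℝ g p := fun p hp =>
    (hg.contDiffAt (hU.mem_nhds hp)).differentiableAt one_ne_zero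
  have hfcont : ContinuousOn (fun p => fderiv ℝ g p (1, 0)) U := by
    have h1 : ContinuousOn (fderiv ℝ g) U := hg.continuousOn_fderiv_of_isOpen hU le_rfl
    exact (ContinuousLinearMap.apply ℝ ℝ (((1:ℝ),(0:ℝ)))).continuous.comp_continuousOn h1
  have hint : IntegrableOn (fun p => fderiv ℝ g p (1, 0)) (Omg a) :=
    (hfcont.mono hΩU).integrableOn_compact (omg_isCompact ha)
  rw [omg_fubini_x ha hint]
  have step1 : ∫ y in (0:ℝ)..1, (∫ x in (0:ℝ)..(a * (1 - y)), fderiv ℝ g (x, y) (1, 0))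
      = ∫ y in (0:ℝ)..1, (g (a * (1 - y), y) - g (0, y)) := by
    apply intervalIntegral.integral_congr
    intro y hy
    rw [uIcc_of_le zero_le_one] at hy
    have h0le : (0:ℝ) ≤ a * (1 - y) := by nlinarith [hy.1, hy.2, ha.le]
    have hmem : ∀ x ∈ Set.uIcc (0:ℝ) (a * (1 - y)), ((x, y) : ℝ × ℝ) ∈ U := by
      intro x hx
      rw [uIcc_of_le h0le] at hx
      have hxa : x ≤ a := hx.2.trans (by nlinarith [hy.1])
      have hya : y ≤ 1 - x / a := by
        rw [le_sub_iff_add_le, ← le_sub_iff_add_le', div_le_iff₀ ha]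
        nlinarith [hx.2]
      exact hΩU ⟨hx.1, hxa, hy.1, hya⟩
    have hcurve : Continuous (fun x : ℝ => ((x, y) : ℝ × ℝ)) := by continuity
    exact intervalIntegral.integral_eq_sub_of_hasDerivAt
      (f := fun x => g (x, y)) (f' := fun x => fderiv ℝ g (x, y) (1, 0))
      (fun x hx => hasDerivAt_slice_x (hgd _ (hmem x hx)))
      ((hfcont.comp hcurve.continuousOn hmem).intervalIntegrable)
  rw [step1]
  have hcont1 : IntervalIntegrable (fun y : ℝ => g (a * (1 - y), y)) volume 0 1 := by
    apply ContinuousOn.intervalIntegrable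
    have hcurve : Continuous (fun y : ℝ => ((a * (1 - y), y) : ℝ × ℝ)) := by continuity
    apply (hg.continuousOn.comp hcurve.continuousOn)
    intro y hy
    rw [uIcc_of_le zero_le_one] at hy
    have h1 : (0:ℝ) ≤ a * (1 - y) := by nlinarith [hy.1, hy.2, ha.le]
    have h2 : a * (1 - y) ≤ a := by nlinarith [hy.1]
    have h3 : y ≤ 1 - a * (1 - y) / a := by
      rw [mul_div_cancel_left₀ _ ha.ne']
      linarith
    exact hΩU ⟨h1, h2, hy.1, h3⟩
  have hcont2 : IntervalIntegrable (fun y : ℝ => g (0, y)) volume 0 1 := by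
    apply ContinuousOn.intervalIntegrable
    have hcurve : Continuous (fun y : ℝ => (((0:ℝ), y) : ℝ × ℝ)) := by continuity
    apply (hg.continuousOn.comp hcurve.continuousOn)
    intro y hy
    rw [uIcc_of_le zero_le_one] at hy
    have : (0:ℝ) ≤ 1 - 0 / a := by simp
    exact hΩU ⟨le_refl 0, ha.le, hy.1, by simpa using hy.2⟩
  rw [intervalIntegral.integral_sub hcont1 hcont2]
  congr 1
  have key : ∀ y : ℝ, g (a * (1 - y), y) = g (a - a * y, 1 - (a - a * y) / a) := by
    intro y
    have h2 : 1 - (a - a * y) / a = y := by field_simp; ring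
    rw [h2, show a - a * y = a * (1 - y) from by ring]
  have e2 := intervalIntegral.integral_comp_sub_mul (a := 0) (b := 1) (c := a)
    (fun t : ℝ => g (t, 1 - t / a)) ha.ne' a
  norm_num at e2
  simp_rw [key]
  rw [e2, one_div]

noncomputable def ux (u : ℝ × ℝ → ℝ) : ℝ × ℝ → ℝ := fun q => fderiv ℝ u q (1, 0)
noncomputable def uy (u : ℝ × ℝ → ℝ) : ℝ × ℝ → ℝ := fun q => fderiv ℝ u q (0, 1)

lemma contDiffOn_ux {u : ℝ × ℝ → ℝ} {U : Set (ℝ × ℝ)} (hU : IsOpen U)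
    (hreg : ContDiffOn ℝ 2 u U) : ContDiffOn ℝ 1 (ux u) U :=
  (hreg.fderiv_of_isOpen hU (by norm_num)).clm_apply contDiffOn_const

lemma contDiffOn_uy {u : ℝ × ℝ → ℝ} {U : Set (ℝ × ℝ)} (hU : IsOpen U)
    (hreg : ContDiffOn ℝ 2 u U) : ContDiffOn ℝ 1 (uy u) U :=
  (hreg.fderiv_of_isOpen hU (by norm_num)).clm_apply contDiffOn_const

lemma mixed_symm {u : ℝ × ℝ → ℝ} {U : Set (ℝ × ℝ)} (hU : IsOpen U)
    (hreg : ContDiffOn ℝ 2 u U) {p : ℝ × ℝ} (hp : p ∈ U) :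
    fderiv ℝ (ux u) p (0, 1) = fderiv ℝ (uy u) p (1, 0) := by
  have hf1 : ContDiffOn ℝ 1 (fderiv ℝ u) U := hreg.fderiv_of_isOpen hU (by norm_num)
  have hdd : DifferentiableAt ℝ (fderiv ℝ u) p :=
    (hf1.contDiffAt (hU.mem_nhds hp)).differentiableAt one_ne_zero
  have hev : ∀ᶠ q in nhds p, HasFDerivAt u (fderiv ℝ u q) q := by
    filter_upwards [hU.mem_nhds hp] with q hq
    exact ((hreg.contDiffAt (hU.mem_nhds hq)).differentiableAt (by norm_num)).hasFDerivAt
  have hsymm := second_derivative_symmetric_of_eventually hev hdd.hasFDerivAt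
    (((0:ℝ),(1:ℝ))) (((1:ℝ),(0:ℝ)))
  have h1 : HasFDerivAt (ux u) ((fderiv ℝ (fderiv ℝ u) p).flip (((1:ℝ),(0:ℝ)))) p := by
    have hc := hdd.hasFDerivAt.clm_apply (hasFDerivAt_const (((1:ℝ),(0:ℝ))) p)
    simp at hc
    exact hc
  have h2 : HasFDerivAt (uy u) ((fderiv ℝ (fderiv ℝ u) p).flip (((0:ℝ),(1:ℝ)))) p := by
    have hc := hdd.hasFDerivAt.clm_apply (hasFDerivAt_const (((0:ℝ),(1:ℝ))) p)
    simp at hc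
    exact hc
  rw [h1.fderiv, h2.fderiv]
  simpa using hsymm

lemma omg_frontier_left {a y : ℝ} (ha : 0 < a) (hy1 : 0 ≤ y) (hy2 : y ≤ 1) :
    ((0, y) : ℝ × ℝ) ∈ frontier (Omg a) := by
  rw [frontier_eq_closure_inter_closure]
  refine ⟨subset_closure ⟨le_refl 0, ha.le, hy1, by simpa using hy2⟩, ?_⟩
  have htend : Filter.Tendsto (fun t : ℝ => ((-t, y) : ℝ × ℝ)) (nhdsWithin 0 (Ioi 0))
      (nhds ((0, y) : ℝ × ℝ)) := by
    have : Filter.Tendsto (fun t : ℝ => ((-t, y) : ℝ × ℝ)) (nhds 0) (nhds ((-(0:ℝ), y))) :=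
      (continuous_neg.prodMk continuous_const).tendsto 0
    simpa using this.mono_left nhdsWithin_le_nhds
  refine mem_closure_of_tendsto htend ?_
  filter_upwards [self_mem_nhdsWithin] with t ht
  rintro ⟨h1, -⟩
  simp only [mem_Ioi] at ht
  simp only [] at h1
  linarith

lemma omg_frontier_bottom {a x : ℝ} (ha : 0 < a) (hx1 : 0 ≤ x) (hx2 : x ≤ a) :
    ((x, 0) : ℝ × ℝ) ∈ frontier (Omg a) := by
  rw [frontier_eq_closure_inter_closure]
  have hxa : x / a ≤ 1 := (div_le_one ha).2 hx2
  refine ⟨subset_closure ⟨hx1, hx2, le_refl 0, by linarith⟩, ?_⟩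
  have htend : Filter.Tendsto (fun t : ℝ => ((x, -t) : ℝ × ℝ)) (nhdsWithin 0 (Ioi 0))
      (nhds ((x, 0) : ℝ × ℝ)) := by
    have : Filter.Tendsto (fun t : ℝ => ((x, -t) : ℝ × ℝ)) (nhds 0) (nhds ((x, -(0:ℝ)))) :=
      (continuous_const.prodMk continuous_neg).tendsto 0
    simpa using this.mono_left nhdsWithin_le_nhds
  refine mem_closure_of_tendsto htend ?_
  filter_upwards [self_mem_nhdsWithin] with t ht
  rintro ⟨-, -, h3, -⟩
  simp only [mem_Ioi] at ht
  simp only [] at h3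
  linarith

lemma omg_frontier_hyp {a x : ℝ} (ha : 0 < a) (hx1 : 0 ≤ x) (hx2 : x ≤ a) :
    ((x, 1 - x / a) : ℝ × ℝ) ∈ frontier (Omg a) := by
  rw [frontier_eq_closure_inter_closure]
  have hxa : x / a ≤ 1 := (div_le_one ha).2 hx2
  have hxa0 : 0 ≤ x / a := div_nonneg hx1 ha.le
  refine ⟨subset_closure ⟨hx1, hx2, by linarith, le_refl _⟩, ?_⟩
  have htend : Filter.Tendsto (fun t : ℝ => ((x, 1 - x / a + t) : ℝ × ℝ))
      (nhdsWithin 0 (Ioi 0)) (nhds ((x, 1 - x / a) : ℝ × ℝ)) := by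
    have : Filter.Tendsto (fun t : ℝ => ((x, 1 - x / a + t) : ℝ × ℝ)) (nhds 0)
        (nhds ((x, 1 - x / a + 0))) :=
      (continuous_const.prodMk (continuous_const.add continuous_id)).tendsto 0
    simpa using this.mono_left nhdsWithin_le_nhds
  refine mem_closure_of_tendsto htend ?_
  filter_upwards [self_mem_nhdsWithin] with t ht
  rintro ⟨-, -, -, h4⟩
  simp only [mem_Ioi] at ht
  simp only [] at h4
  linarith

section BVal
variable {a : ℝ} {u : ℝ × ℝ → ℝ} {U : Set (ℝ × ℝ)}

lemma ux_bottom (ha : 0 < a) (hU : IsOpen U) (hΩU : Omg a ⊆ U)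
    (hreg : ContDiffOn ℝ 2 u U) (hbdry : ∀ p ∈ frontier (Omg a), u p = 0)
    {x : ℝ} (hx : x ∈ Ioo 0 a) : ux u (x, 0) = 0 := by
  have hmem : ((x, 0) : ℝ × ℝ) ∈ Omg a := by
    have hxa : x / a ≤ 1 := (div_le_one ha).2 hx.2.le
    exact ⟨hx.1.le, hx.2.le, le_refl 0, by linarith⟩
  have hud : DifferentiableAt ℝ u (x, 0) :=
    (hreg.contDiffAt (hU.mem_nhds (hΩU hmem))).differentiableAt (by norm_num)
  have h1 : HasDerivAt (fun t => u (t, 0)) (ux u (x, 0)) x := hasDerivAt_slice_x hud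
  have h2 : (fun t => u (t, 0)) =ᶠ[nhds x] (fun _ => (0:ℝ)) := by
    filter_upwards [Ioo_mem_nhds hx.1 hx.2] with t ht
    exact hbdry _ (omg_frontier_bottom ha ht.1.le ht.2.le)
  have h3 : HasDerivAt (fun t => u (t, 0)) 0 x :=
    (hasDerivAt_const x (0:ℝ)).congr_of_eventuallyEq h2
  exact h1.unique h3

lemma uy_hyp (ha : 0 < a) (hU : IsOpen U) (hΩU : Omg a ⊆ U)
    (hreg : ContDiffOn ℝ 2 u U) (hbdry : ∀ p ∈ frontier (Omg a), u p = 0)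
    {x : ℝ} (hx : x ∈ Ioo 0 a) :
    uy u (x, 1 - x / a) = a * ux u (x, 1 - x / a) := by
  have hxa : x / a ≤ 1 := (div_le_one ha).2 hx.2.le
  have hxa0 : 0 ≤ x / a := div_nonneg hx.1.le ha.le
  have hmem : ((x, 1 - x / a) : ℝ × ℝ) ∈ Omg a :=
    ⟨hx.1.le, hx.2.le, by linarith, le_refl _⟩
  have hud : DifferentiableAt ℝ u (x, 1 - x / a) :=
    (hreg.contDiffAt (hU.mem_nhds (hΩU hmem))).differentiableAt (by norm_num)
  have hcurve : HasDerivAt (fun t : ℝ => ((t, 1 - t / a) : ℝ × ℝ))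
      (((1:ℝ), -(1/a))) x :=
    (hasDerivAt_id x).prodMk (((hasDerivAt_id x).div_const a).const_sub 1)
  have h1 : HasDerivAt (fun t => u (t, 1 - t / a))
      (fderiv ℝ u (x, 1 - x / a) ((1:ℝ), -(1/a))) x :=
    hud.hasFDerivAt.comp_hasDerivAt x hcurve
  have h2 : (fun t => u (t, 1 - t / a)) =ᶠ[nhds x] (fun _ => (0:ℝ)) := by
    filter_upwards [Ioo_mem_nhds hx.1 hx.2] with t ht
    exact hbdry _ (omg_frontier_hyp ha ht.1.le ht.2.le)
  have h3 : HasDerivAt (fun t => u (t, 1 - t / a)) 0 x :=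
    (hasDerivAt_const x (0:ℝ)).congr_of_eventuallyEq h2
  have h4 : fderiv ℝ u (x, 1 - x / a) ((1:ℝ), -(1/a)) = 0 := h1.unique h3
  have h5 : (((1:ℝ), -(1/a)) : ℝ × ℝ) = ((1:ℝ), (0:ℝ)) + (-(1/a)) • (((0:ℝ), (1:ℝ))) := by
    simp
  rw [h5, map_add, ContinuousLinearMap.map_smul] at h4
  have h6 : ux u (x, 1 - x/a) + (-(1/a)) * uy u (x, 1 - x/a) = 0 := by
    simpa [ux, uy] using h4
  have h7 : ∀ A B : ℝ, A + (-(1/a)) * B = 0 → B = a * A := by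
    intro A B hAB
    have hmul := congrArg (fun r => a * r) hAB
    simp only [mul_zero] at hmul
    have h2 : a * (A + (-(1/a)) * B) = a * A - B := by field_simp; ring
    linarith [hmul, h2]
  exact h7 _ _ h6

end BVal

noncomputable def PP (h : ℝ) (u : ℝ × ℝ → ℝ) : ℝ × ℝ → ℝ := fun p =>
  h ^ 2 * p.1 * (ux u p) ^ 2 - h ^ 2 * p.1 / 2 * ((ux u p) ^ 2 + (uy u p) ^ 2)
    + p.1 / 2 * (u p) ^ 2 + h ^ 2 / 2 * (u p) * (ux u p)

noncomputable def QQ (h : ℝ) (u : ℝ × ℝ → ℝ) : ℝ × ℝ → ℝ := fun p =>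
  h ^ 2 * p.1 * ux u p * uy u p + h ^ 2 / 2 * u p * uy u p

lemma contDiffOn_PP {h : ℝ} {u : ℝ × ℝ → ℝ} {U : Set (ℝ × ℝ)} (hU : IsOpen U)
    (hreg : ContDiffOn ℝ 2 u U) : ContDiffOn ℝ 1 (PP h u) U := by
  have hux := contDiffOn_ux hU hreg
  have huy := contDiffOn_uy hU hreg
  have hu1 : ContDiffOn ℝ 1 u U := hreg.of_le (by norm_num)
  have hfst : ContDiffOn ℝ 1 (fun p : ℝ × ℝ => p.1) U := contDiff_fst.contDiffOn
  exact ((((hfst.const_smul (h^2)).mul (hux.pow 2)).sub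
      (((hfst.const_smul (h^2)).div_const 2).mul ((hux.pow 2).add (huy.pow 2)))).add
      ((hfst.div_const 2).mul (hu1.pow 2))).add
      (((hu1.const_smul (h^2/2)).mul hux))

lemma contDiffOn_QQ {h : ℝ} {u : ℝ × ℝ → ℝ} {U : Set (ℝ × ℝ)} (hU : IsOpen U)
    (hreg : ContDiffOn ℝ 2 u U) : ContDiffOn ℝ 1 (QQ h u) U := by
  have hux := contDiffOn_ux hU hreg
  have huy := contDiffOn_uy hU hreg
  have hu1 : ContDiffOn ℝ 1 u U := hreg.of_le (by norm_num)
  have hfst : ContDiffOn ℝ 1 (fun p : ℝ × ℝ => p.1) U := contDiff_fst.contDiffOn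
  exact (((hfst.const_smul (h^2)).mul hux).mul huy).add ((hu1.const_smul (h^2/2)).mul huy)

lemma div_identity {h : ℝ} {u : ℝ × ℝ → ℝ} {U : Set (ℝ × ℝ)} (hU : IsOpen U)
    (hreg : ContDiffOn ℝ 2 u U) {p : ℝ × ℝ} (hp : p ∈ U)
    (heq : h ^ 2 * (fderiv ℝ (ux u) p (1, 0) + fderiv ℝ (uy u) p (0, 1)) = -(u p)) :
    fderiv ℝ (PP h u) p (1, 0) + fderiv ℝ (QQ h u) p (0, 1) = (h * ux u p) ^ 2 := by
  have hud : DifferentiableAt ℝ u p :=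
    (hreg.contDiffAt (hU.mem_nhds hp)).differentiableAt (by norm_num)
  have huxd : DifferentiableAt ℝ (ux u) p :=
    ((contDiffOn_ux hU hreg).contDiffAt (hU.mem_nhds hp)).differentiableAt one_ne_zero
  have huyd : DifferentiableAt ℝ (uy u) p :=
    ((contDiffOn_uy hU hreg).contDiffAt (hU.mem_nhds hp)).differentiableAt one_ne_zero
  have hPd : DifferentiableAt ℝ (PP h u) p :=
    ((contDiffOn_PP hU hreg).contDiffAt (hU.mem_nhds hp)).differentiableAt one_ne_zero
  have hQd : DifferentiableAt ℝ (QQ h u) p :=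
    ((contDiffOn_QQ hU hreg).contDiffAt (hU.mem_nhds hp)).differentiableAt one_ne_zero
  have hsym : fderiv ℝ (ux u) p (0, 1) = fderiv ℝ (uy u) p (1, 0) := mixed_symm hU hreg hp
  have hU1 : HasDerivAt (fun t => u (t, p.2)) (ux u p) p.1 := hasDerivAt_slice_x hud
  have hX1 : HasDerivAt (fun t => ux u (t, p.2)) (fderiv ℝ (ux u) p (1, 0)) p.1 :=
    hasDerivAt_slice_x huxd
  have hY1 : HasDerivAt (fun t => uy u (t, p.2)) (fderiv ℝ (uy u) p (1, 0)) p.1 :=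
    hasDerivAt_slice_x huyd
  have hU2 : HasDerivAt (fun s => u (p.1, s)) (uy u p) p.2 := hasDerivAt_slice_y hud
  have hX2 : HasDerivAt (fun s => ux u (p.1, s)) (fderiv ℝ (ux u) p (0, 1)) p.2 :=
    hasDerivAt_slice_y huxd
  have hY2 : HasDerivAt (fun s => uy u (p.1, s)) (fderiv ℝ (uy u) p (0, 1)) p.2 :=
    hasDerivAt_slice_y huyd
  have hid1 : HasDerivAt (fun t : ℝ => t) 1 p.1 := hasDerivAt_id p.1
  have hP' : HasDerivAt (fun t => PP h u (t, p.2)) _ p.1 :=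
    ((((hid1.const_mul (h^2)).mul (hX1.pow 2)).sub
      (((hid1.const_mul (h^2)).div_const 2).mul ((hX1.pow 2).add (hY1.pow 2)))).add
      ((hid1.div_const 2).mul (hU1.pow 2))).add
      ((hU1.const_mul (h^2/2)).mul hX1)
  have hQ' : HasDerivAt (fun s => QQ h u (p.1, s)) _ p.2 :=
    (((hX2.const_mul (h^2 * p.1)).mul hY2).add ((hU2.const_mul (h^2/2)).mul hY2))
  have hPx := (hasDerivAt_slice_x hPd).unique hP'
  have hQy := (hasDerivAt_slice_y hQd).unique hQ'
  rw [hPx, hQy]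
  simp only [Prod.mk.eta, Pi.pow_apply, Pi.add_apply]
  linear_combination (p.1 * ux u p + u p / 2) * heq
    + (h ^ 2 * p.1 * uy u p) * hsym

/-- For an `L²`-normalized Dirichlet eigenfunction `u` on the right triangle `Ω`,
the interior `x`-energy is given by the weighted boundary integral over the hypotenuse:
`2∫_Ω |h ∂_x u|² dV = (1/a)·∫₀^a x·|h ∂_ν u(x, 1-x/a)|² dx`, where
`∂_ν u = γ⁻¹(∂_x u + a ∂_y u)`, `γ = (1+a²)^{1/2}`. -/
theorem x_energy_weighted_boundary (a : ℝ) (ha : 0 < a) (h : ℝ) (hh : 0 < h)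
    (u : ℝ × ℝ → ℝ)
    (U : Set (ℝ × ℝ)) (hU : IsOpen U) (hΩU : Omg a ⊆ U) (hreg : ContDiffOn ℝ 2 u U)
    (heig : ∀ p ∈ Omg a,
      -h ^ 2 *
        (fderiv ℝ (fun q => fderiv ℝ u q (1, 0)) p (1, 0)
          + fderiv ℝ (fun q => fderiv ℝ u q (0, 1)) p (0, 1))
      = u p)
    (hbdry : ∀ p ∈ frontier (Omg a), u p = 0)
    (hnorm : ∫ p in Omg a, (u p) ^ 2 = 1) :
    2 * ∫ p in Omg a, (h * fderiv ℝ u p (1, 0)) ^ 2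
      = (1 / a) * ∫ x in (0:ℝ)..a,
          x * (h * ((Real.sqrt (1 + a ^ 2))⁻¹ *
            (fderiv ℝ u (x, 1 - x / a) (1, 0)
              + a * fderiv ℝ u (x, 1 - x / a) (0, 1)))) ^ 2 := by
  have hmeasΩ := (omg_isClosed a).measurableSet
  have hPP1 : ContDiffOn ℝ 1 (PP h u) U := contDiffOn_PP hU hreg
  have hQQ1 : ContDiffOn ℝ 1 (QQ h u) U := contDiffOn_QQ hU hreg
  -- pointwise divergence identity on Ω
  have hpt : ∀ p ∈ Omg a, (h * fderiv ℝ u p (1, 0)) ^ 2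
      = fderiv ℝ (PP h u) p (1, 0) + fderiv ℝ (QQ h u) p (0, 1) := by
    intro p hp
    have heq : h ^ 2 * (fderiv ℝ (ux u) p (1, 0) + fderiv ℝ (uy u) p (0, 1)) = -(u p) := by
      have h0 := heig p hp
      unfold ux uy
      linarith
    exact (div_identity hU hreg (hΩU hp) heq).symm
  rw [show (∫ p in Omg a, (h * fderiv ℝ u p (1, 0)) ^ 2)
      = ∫ p in Omg a, (fderiv ℝ (PP h u) p (1, 0) + fderiv ℝ (QQ h u) p (0, 1)) from
    setIntegral_congr_fun hmeasΩ hpt]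
  have hcont : ∀ (g : ℝ × ℝ → ℝ), ContDiffOn ℝ 1 g U → ∀ v : ℝ × ℝ,
      IntegrableOn (fun p => fderiv ℝ g p v) (Omg a) := by
    intro g hg v
    have h1 : ContinuousOn (fderiv ℝ g) U := hg.continuousOn_fderiv_of_isOpen hU le_rfl
    have h2 : ContinuousOn (fun p => fderiv ℝ g p v) U :=
      (ContinuousLinearMap.apply ℝ ℝ v).continuous.comp_continuousOn h1
    exact (h2.mono hΩU).integrableOn_compact (omg_isCompact ha)
  rw [integral_add (hcont _ hPP1 _) (hcont _ hQQ1 _),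
    omg_divX ha hU hΩU hPP1, omg_divY ha hU hΩU hQQ1]
  -- the two leg boundary integrals vanish
  have hP0 : (∫ y in (0:ℝ)..1, PP h u (0, y)) = 0 := by
    have hz : ∀ y ∈ uIcc (0:ℝ) 1, PP h u (0, y) = (fun _ : ℝ => (0:ℝ)) y := by
      intro y hy
      rw [uIcc_of_le zero_le_one] at hy
      have hu0 : u (0, y) = 0 := hbdry _ (omg_frontier_left ha hy.1 hy.2)
      simp [PP, hu0]
    rw [intervalIntegral.integral_congr hz]
    simp
  have hQ0 : (∫ x in (0:ℝ)..a, QQ h u (x, 0)) = 0 := by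
    rw [intervalIntegral.integral_of_le ha.le, integral_Ioc_eq_integral_Ioo]
    have hz : EqOn (fun x : ℝ => QQ h u (x, 0)) (fun _ : ℝ => (0:ℝ)) (Ioo 0 a) := by
      intro x hx
      have hu0 : u (x, 0) = 0 := hbdry _ (omg_frontier_bottom ha hx.1.le hx.2.le)
      have hux0 : ux u (x, 0) = 0 := ux_bottom ha hU hΩU hreg hbdry hx
      simp [QQ, hu0, hux0]
    rw [setIntegral_congr_fun measurableSet_Ioo hz]
    simp
  -- interval integrability of boundary slices
  have hhyp_mem : ∀ x ∈ uIcc (0:ℝ) a, ((x, 1 - x / a) : ℝ × ℝ) ∈ U := by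
    intro x hx
    rw [uIcc_of_le ha.le] at hx
    have hxa : x / a ≤ 1 := (div_le_one ha).2 hx.2
    have hxa0 : 0 ≤ x / a := div_nonneg hx.1 ha.le
    exact hΩU ⟨hx.1, hx.2, by linarith, le_refl _⟩
  have hhypcurve : Continuous (fun x : ℝ => ((x, 1 - x / a) : ℝ × ℝ)) := by continuity
  have hPhyp_int : IntervalIntegrable (fun x => PP h u (x, 1 - x / a)) volume 0 a :=
    ((hPP1.continuousOn.comp hhypcurve.continuousOn hhyp_mem)).intervalIntegrable
  have hQhyp_int : IntervalIntegrable (fun x => QQ h u (x, 1 - x / a)) volume 0 a :=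
    ((hQQ1.continuousOn.comp hhypcurve.continuousOn hhyp_mem)).intervalIntegrable
  have hQbot_int : IntervalIntegrable (fun x => QQ h u (x, 0)) volume 0 a := by
    have hbotcurve : Continuous (fun x : ℝ => ((x, (0:ℝ)) : ℝ × ℝ)) := by continuity
    have hbot_mem : ∀ x ∈ uIcc (0:ℝ) a, ((x, (0:ℝ)) : ℝ × ℝ) ∈ U := by
      intro x hx
      rw [uIcc_of_le ha.le] at hx
      have hxa : x / a ≤ 1 := (div_le_one ha).2 hx.2
      exact hΩU ⟨hx.1, hx.2, le_refl _, by linarith⟩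
    exact ((hQQ1.continuousOn.comp hbotcurve.continuousOn hbot_mem)).intervalIntegrable
  rw [intervalIntegral.integral_sub hQhyp_int hQbot_int, hP0, hQ0, sub_zero, sub_zero]
  -- rewrite the right-hand side boundary integral
  have hγ' : (1 + a ^ 2) * ((Real.sqrt (1 + a ^ 2))⁻¹) ^ 2 = 1 := by
    have h0 : (0:ℝ) ≤ 1 + a ^ 2 := by positivity
    have h1 : (0:ℝ) < 1 + a ^ 2 := by positivity
    rw [← one_div, div_pow, one_pow, Real.sq_sqrt h0]
    field_simp
  have hIR : (∫ x in (0:ℝ)..a,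
        x * (h * ((Real.sqrt (1 + a ^ 2))⁻¹ *
          (fderiv ℝ u (x, 1 - x / a) (1, 0)
            + a * fderiv ℝ u (x, 1 - x / a) (0, 1)))) ^ 2)
      = ∫ x in (0:ℝ)..a, (2 * PP h u (x, 1 - x / a) + (2 * a) * QQ h u (x, 1 - x / a)) := by
    rw [intervalIntegral.integral_of_le ha.le, intervalIntegral.integral_of_le ha.le,
      integral_Ioc_eq_integral_Ioo, integral_Ioc_eq_integral_Ioo]
    apply setIntegral_congr_fun measurableSet_Ioo
    intro x hx
    have hu0 : u (x, 1 - x / a) = 0 := hbdry _ (omg_frontier_hyp ha hx.1.le hx.2.le)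
    have hyx : uy u (x, 1 - x / a) = a * ux u (x, 1 - x / a) :=
      uy_hyp ha hU hΩU hreg hbdry hx
    simp only [PP, QQ]
    unfold ux uy at hyx ⊢
    rw [hyx, hu0]
    linear_combination (x * h ^ 2 * (1 + a ^ 2) * (fderiv ℝ u (x, 1 - x / a) (1, 0)) ^ 2) * hγ'
  rw [hIR, intervalIntegral.integral_add (hPhyp_int.const_mul 2) (hQhyp_int.const_mul (2 * a)),
    intervalIntegral.integral_const_mul, intervalIntegral.integral_const_mul]
  field_simp
end
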